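/- arXiv:2109.06556 — 11 statements merged into one kernel-verified Lean document; each statement's English description precedes it below -/
import Mathlib

section
/- Suppose C(t) is nonempty and convex for every t ∈ [0,T], and A₀ is coercive with modulus α₀ > 0, i.e. ⟨A₀ x, x⟩ ≥ α₀‖x‖² for all x ∈ H. If x and y are solutions of the sweeping process (P) with initial values x₀ ∈ C(0) and y₀ ∈ C(0) respectively, then ‖x(t) − y(t)‖ ≤ √(‖A₀‖/α₀) · ‖x₀ − y₀‖ for every t ∈ [0,T]. In particular, the map sending an initial value to the (unique) solution is Lipschitz continuous from C(0) into C⁰([0,T],H) with modulus √(‖A₀‖/α₀). -/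
/-!
Put `w = x - y` and `g = vx - vy`. Testing the variational inequality of each solution with the
velocity of the other and adding gives `⟪A₀ w, g⟫ ≤ -⟪A₁ g, g⟫ ≤ 0` almost everywhere. The energy
`s ↦ ⟪A₀ w s, w s⟫` is absolutely continuous with derivative `2 ⟪A₀ w, g⟫` (symmetry of `A₀`),
so it is nonincreasing, and
`α₀ ‖w t‖² ≤ ⟪A₀ w t, w t⟫ ≤ ⟪A₀ w 0, w 0⟫ ≤ ‖A₀‖ ‖x₀ - y₀‖²`.
-/

open MeasureTheory Set
open scoped RealInnerProductSpace

/-- `u` (with Bochner-integrable derivative `v`) is a solution of the sweeping process (P)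
with velocity constraint `C`, data `A₀, A₁, f`, and initial value `u₀` on `[0,T]`. -/
def SweepSol {H : Type*} [NormedAddCommGroup H] [InnerProductSpace ℝ H]
    (T : ℝ) (A₀ A₁ : H →L[ℝ] H) (f : ℝ → H) (C : ℝ → Set H)
    (u₀ : H) (u v : ℝ → H) : Prop :=
  IntegrableOn v (Icc 0 T) ∧
  (∀ t ∈ Icc (0:ℝ) T, u t = u₀ + ∫ τ in (0:ℝ)..t, v τ) ∧
  (∀ᵐ t ∂(volume.restrict (Icc (0:ℝ) T)),
    v t ∈ C t ∧ ∀ z ∈ C t, 0 ≤ ⟪A₁ (v t) + A₀ (u t) - f t, z - v t⟫)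

open Filter

theorem AbsolutelyContinuousOnInterval.of_dist_le {X Y : Type*} [PseudoMetricSpace X]
    [PseudoMetricSpace Y] {f : ℝ → X} {g : ℝ → Y} {a b K : ℝ}
    (hg : AbsolutelyContinuousOnInterval g a b)
    (hfg : ∀ x ∈ uIcc a b, ∀ y ∈ uIcc a b, dist (f x) (f y) ≤ K * dist (g x) (g y)) :
    AbsolutelyContinuousOnInterval f a b := by
  unfold AbsolutelyContinuousOnInterval at hg ⊢
  apply squeeze_zero' (Eventually.of_forall fun _ ↦ Finset.sum_nonneg fun _ _ ↦ dist_nonneg) ?_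
    (by simpa using hg.const_mul K)
  rw [eventually_inf_principal]
  filter_upwards with E hE
  rw [Finset.mul_sum]
  exact Finset.sum_le_sum fun i hi ↦ hfg _ (hE.1 i hi).1 _ (hE.1 i hi).2

theorem IntervalIntegrable.absolutelyContinuousOnInterval_primitive {E : Type*}
    [NormedAddCommGroup E] [NormedSpace ℝ E] {f : ℝ → E} {a b c : ℝ}
    (hf : IntervalIntegrable f volume a b) (hc : c ∈ uIcc a b) :
    AbsolutelyContinuousOnInterval (fun x ↦ ∫ v in c..x, f v) a b := by
  refine (hf.norm.absolutelyContinuousOnInterval_intervalIntegral hc).of_dist_le (K := 1)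
    fun x hx y hy ↦ ?_
  rw [one_mul, dist_eq_norm, dist_eq_norm, Real.norm_eq_abs,
    intervalIntegral.integral_interval_sub_left (hf.mono_set (uIcc_subset_uIcc hc hx))
      (hf.mono_set (uIcc_subset_uIcc hc hy)),
    intervalIntegral.integral_interval_sub_left (hf.norm.mono_set (uIcc_subset_uIcc hc hx))
      (hf.norm.mono_set (uIcc_subset_uIcc hc hy))]
  exact intervalIntegral.norm_integral_le_abs_integral_norm

section QuadraticForm

variable {E : Type*} [NormedAddCommGroup E] [InnerProductSpace ℝ E] (A : E →L[ℝ] E)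

theorem ContinuousLinearMap.abs_inner_apply_self_sub_le (u v : E) :
    |⟪A u, u⟫ - ⟪A v, v⟫| ≤ ‖A‖ * (‖u‖ + ‖v‖) * ‖u - v‖ := by
  have hsplit : ⟪A u, u⟫ - ⟪A v, v⟫ = ⟪A (u - v), u⟫ + ⟪A v, u - v⟫ := by
    simp only [map_sub, inner_sub_left, inner_sub_right]; ring
  rw [hsplit]
  calc |⟪A (u - v), u⟫ + ⟪A v, u - v⟫|
      ≤ ‖A (u - v)‖ * ‖u‖ + ‖A v‖ * ‖u - v‖ :=
        (abs_add_le _ _).trans (add_le_add (abs_real_inner_le_norm _ _)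
          (abs_real_inner_le_norm _ _))
    _ ≤ ‖A‖ * ‖u - v‖ * ‖u‖ + ‖A‖ * ‖v‖ * ‖u - v‖ := by
        gcongr <;> exact A.le_opNorm _
    _ = ‖A‖ * (‖u‖ + ‖v‖) * ‖u - v‖ := by ring

theorem AbsolutelyContinuousOnInterval.inner_apply_self {w : ℝ → E} {a b : ℝ}
    (hw : AbsolutelyContinuousOnInterval w a b) :
    AbsolutelyContinuousOnInterval (fun s ↦ ⟪A (w s), w s⟫) a b := by
  obtain ⟨M, hM⟩ := hw.exists_bound
  refine hw.of_dist_le (K := ‖A‖ * (M + M)) fun x hx y hy ↦ ?_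
  rw [Real.dist_eq, dist_eq_norm]
  calc _ ≤ ‖A‖ * (‖w x‖ + ‖w y‖) * ‖w x - w y‖ := A.abs_inner_apply_self_sub_le _ _
    _ ≤ ‖A‖ * (M + M) * ‖w x - w y‖ := by gcongr <;> simp [hM, hx, hy]

theorem HasDerivAt.inner_apply_self (hA : (A : E →ₗ[ℝ] E).IsSymmetric) {w : ℝ → E} {w' : E}
    {s : ℝ} (hw : HasDerivAt w w' s) :
    HasDerivAt (fun s ↦ ⟪A (w s), w s⟫) (2 * ⟪A (w s), w'⟫) s := by
  have h := (A.hasFDerivAt.comp_hasDerivAt s hw).inner ℝ hw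
  refine h.congr_deriv ?_
  have hsymm : ⟪A w', w s⟫ = ⟪A (w s), w'⟫ := (real_inner_comm _ _).trans (hA _ _).symm
  rw [Function.comp_apply, hsymm]
  ring

theorem AbsolutelyContinuousOnInterval.inner_apply_self_le (hA : (A : E →ₗ[ℝ] E).IsSymmetric)
    {w w' : ℝ → E} {a b : ℝ} (hab : a ≤ b) (hw : AbsolutelyContinuousOnInterval w a b)
    (hw' : ∀ᵐ s, s ∈ Icc a b → HasDerivAt w (w' s) s)
    (hdec : ∀ᵐ s, s ∈ Icc a b → ⟪A (w s), w' s⟫ ≤ 0) :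
    ⟪A (w b), w b⟫ ≤ ⟪A (w a), w a⟫ := by
  have hderiv : 0 ≤ᵐ[volume.restrict (Icc a b)] fun s ↦ -deriv (fun s ↦ ⟪A (w s), w s⟫) s := by
    rw [EventuallyLE, ae_restrict_iff' measurableSet_Icc]
    filter_upwards [hw', hdec] with s hs' hsdec hs
    rw [Pi.zero_apply, ((hs' hs).inner_apply_self A hA).deriv]
    linarith [hsdec hs]
  have hint := intervalIntegral.integral_nonneg_of_ae_restrict hab hderiv
  rw [intervalIntegral.integral_neg, (hw.inner_apply_self A).integral_deriv_eq_sub] at hint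
  linarith

theorem ContinuousLinearMap.norm_le_sqrt_div_mul_norm {α : ℝ} (hα : 0 < α)
    (hcoer : ∀ x, α * ‖x‖ ^ 2 ≤ ⟪A x, x⟫) {u w : E} (h : ⟪A u, u⟫ ≤ ⟪A w, w⟫) :
    ‖u‖ ≤ √(‖A‖ / α) * ‖w‖ := by
  have hw : ⟪A w, w⟫ ≤ ‖A‖ * ‖w‖ ^ 2 :=
    calc ⟪A w, w⟫ ≤ ‖A w‖ * ‖w‖ := real_inner_le_norm _ _
      _ ≤ ‖A‖ * ‖w‖ * ‖w‖ := by gcongr; exact A.le_opNorm w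
      _ = ‖A‖ * ‖w‖ ^ 2 := by ring
  rw [← Real.sqrt_sq (norm_nonneg w), ← Real.sqrt_mul (by positivity),
    Real.le_sqrt (norm_nonneg u) (by positivity), div_mul_eq_mul_div, le_div_iff₀ hα]
  linarith [hcoer u]

end QuadraticForm

section SweepingProcess

variable {H : Type*} [NormedAddCommGroup H] [InnerProductSpace ℝ H] {A₀ A₁ : H →L[ℝ] H}

theorem inner_apply_sub_nonpos_of_variational_ineq (hA₁ : ∀ x, 0 ≤ ⟪A₁ x, x⟫) {K : Set H}
    {p u₁ u₂ v₁ v₂ : H} (hv₁ : v₁ ∈ K) (hv₂ : v₂ ∈ K)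
    (h₁ : ∀ z ∈ K, 0 ≤ ⟪A₁ v₁ + A₀ u₁ - p, z - v₁⟫)
    (h₂ : ∀ z ∈ K, 0 ≤ ⟪A₁ v₂ + A₀ u₂ - p, z - v₂⟫) :
    ⟪A₀ (u₁ - u₂), v₁ - v₂⟫ ≤ 0 := by
  have hsum : ⟪A₁ (v₁ - v₂), v₁ - v₂⟫ + ⟪A₀ (u₁ - u₂), v₁ - v₂⟫ =
      -(⟪A₁ v₁ + A₀ u₁ - p, v₂ - v₁⟫ + ⟪A₁ v₂ + A₀ u₂ - p, v₁ - v₂⟫) := by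
    simp only [map_sub, inner_sub_left, inner_sub_right, inner_add_left]
    ring
  linarith [h₁ v₂ hv₂, h₂ v₁ hv₁, hA₁ (v₁ - v₂)]

variable {T : ℝ} {f : ℝ → H} {C : ℝ → Set H} {x₀ y₀ : H} {x y vx vy : ℝ → H}

theorem SweepSol.intervalIntegrable (hx : SweepSol T A₀ A₁ f C x₀ x vx) {t : ℝ}
    (ht : t ∈ Icc 0 T) : IntervalIntegrable vx volume 0 t :=
  (hx.1.mono_set (by rw [uIcc_of_le ht.1]; exact Icc_subset_Icc_right ht.2)).intervalIntegrable

theorem SweepSol.sub_eq_sub_add_integral (hx : SweepSol T A₀ A₁ f C x₀ x vx)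
    (hy : SweepSol T A₀ A₁ f C y₀ y vy) {t : ℝ} (ht : t ∈ Icc 0 T) :
    x t - y t = x₀ - y₀ + ∫ τ in (0:ℝ)..t, (vx τ - vy τ) := by
  rw [hx.2.1 t ht, hy.2.1 t ht,
    intervalIntegral.integral_sub (hx.intervalIntegrable ht) (hy.intervalIntegrable ht)]
  abel

theorem SweepSol.ae_inner_apply_sub_nonpos (hA₁ : ∀ x, 0 ≤ ⟪A₁ x, x⟫)
    (hx : SweepSol T A₀ A₁ f C x₀ x vx) (hy : SweepSol T A₀ A₁ f C y₀ y vy) :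
    ∀ᵐ t ∂(volume.restrict (Icc (0:ℝ) T)), ⟪A₀ (x t - y t), vx t - vy t⟫ ≤ 0 := by
  filter_upwards [hx.2.2, hy.2.2] with t ⟨hvx, hx'⟩ ⟨hvy, hy'⟩
  exact inner_apply_sub_nonpos_of_variational_ineq hA₁ hvx hvy hx' hy'

end SweepingProcess

theorem solution_sensitivity_A0_coercive_general
    {H : Type*} [NormedAddCommGroup H] [InnerProductSpace ℝ H] [CompleteSpace H]
    (T : ℝ) (A₀ A₁ : H →L[ℝ] H)
    (hA₀sym : ∀ x y : H, ⟪A₀ x, y⟫ = ⟪x, A₀ y⟫)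
    (hA₁pos : ∀ x : H, 0 ≤ ⟪A₁ x, x⟫)
    (f : ℝ → H)
    (C : ℝ → Set H)
    (α₀ : ℝ) (hα₀ : 0 < α₀)
    (hcoer : ∀ x : H, α₀ * ‖x‖ ^ 2 ≤ ⟪A₀ x, x⟫)
    (x₀ y₀ : H)
    (x y vx vy : ℝ → H)
    (hx : SweepSol T A₀ A₁ f C x₀ x vx)
    (hy : SweepSol T A₀ A₁ f C y₀ y vy) :
    ∀ t ∈ Icc (0:ℝ) T, ‖x t - y t‖ ≤ Real.sqrt (‖A₀‖ / α₀) * ‖x₀ - y₀‖ := by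
  intro t ht
  set W : ℝ → H := fun s ↦ x₀ - y₀ + ∫ τ in (0:ℝ)..s, (vx τ - vy τ)
  have hg := (hx.intervalIntegrable ht).sub (hy.intervalIntegrable ht)
  have hWac : AbsolutelyContinuousOnInterval W 0 t :=
    (LipschitzWith.const _).lipschitzOnWith.absolutelyContinuousOnInterval.fun_add
      (hg.absolutelyContinuousOnInterval_primitive left_mem_uIcc)
  have hW' : ∀ᵐ s, s ∈ Icc 0 t → HasDerivAt W (vx s - vy s) s := by
    filter_upwards [hg.ae_hasDerivAt_integral] with s hs hst
    exact (hs (uIcc_of_le ht.1 ▸ hst) 0 left_mem_uIcc).const_add _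
  have hdec : ∀ᵐ s, s ∈ Icc 0 t → ⟪A₀ (W s), vx s - vy s⟫ ≤ 0 := by
    have hxy := hx.ae_inner_apply_sub_nonpos hA₁pos hy
    filter_upwards [(ae_restrict_iff' measurableSet_Icc).1 hxy] with s hs hst
    have hsT : s ∈ Icc 0 T := ⟨hst.1, hst.2.trans ht.2⟩
    simpa only [W, ← hx.sub_eq_sub_add_integral hy hsT] using hs hsT
  have hmono := hWac.inner_apply_self_le A₀ hA₀sym ht.1 hW' hdec
  rw [hx.sub_eq_sub_add_integral hy ht]
  exact A₀.norm_le_sqrt_div_mul_norm hα₀ hcoer (by simpa [W] using hmono)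

theorem solution_sensitivity_A0_coercive
    {H : Type*} [NormedAddCommGroup H] [InnerProductSpace ℝ H] [CompleteSpace H]
    (T : ℝ) (hT : 0 < T) (A₀ A₁ : H →L[ℝ] H)
    (hA₀sym : ∀ x y : H, ⟪A₀ x, y⟫ = ⟪x, A₀ y⟫)
    (hA₁sym : ∀ x y : H, ⟪A₁ x, y⟫ = ⟪x, A₁ y⟫)
    (hA₀pos : ∀ x : H, 0 ≤ ⟪A₀ x, x⟫)
    (hA₁pos : ∀ x : H, 0 ≤ ⟪A₁ x, x⟫)
    (f : ℝ → H) (hf : ContinuousOn f (Icc 0 T))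
    (C : ℝ → Set H)
    (hC : ∀ t ∈ Icc (0:ℝ) T, (C t).Nonempty ∧ Convex ℝ (C t))
    (α₀ : ℝ) (hα₀ : 0 < α₀)
    (hcoer : ∀ x : H, α₀ * ‖x‖ ^ 2 ≤ ⟪A₀ x, x⟫)
    (x₀ y₀ : H) (hx₀ : x₀ ∈ C 0) (hy₀ : y₀ ∈ C 0)
    (x y vx vy : ℝ → H)
    (hx : SweepSol T A₀ A₁ f C x₀ x vx)
    (hy : SweepSol T A₀ A₁ f C y₀ y vy) :
    ∀ t ∈ Icc (0:ℝ) T, ‖x t - y t‖ ≤ Real.sqrt (‖A₀‖ / α₀) * ‖x₀ - y₀‖ :=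
  solution_sensitivity_A0_coercive_general T A₀ A₁ hA₀sym hA₁pos f C α₀ hα₀ hcoer x₀ y₀ x y vx vy hx
    hy
end

section
/- Suppose C(t) is nonempty and convex for every t ∈ [0,T], and A₁ is coercive with modulus α₁ > 0, i.e. ⟨A₁ x, x⟩ ≥ α₁‖x‖² for all x ∈ H. If x and y are solutions of the sweeping process (P) with initial values x₀ ∈ C(0) and y₀ ∈ C(0), with Bochner-integrable derivatives v_x and v_y respectively, then for every t ∈ [0,T]: ∫₀ᵗ ‖v_x(τ) − v_y(τ)‖² dτ ≤ (‖A₀‖/(2α₁)) · ‖x₀ − y₀‖². -/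
open MeasureTheory Set
open scoped RealInnerProductSpace

section

variable {H : Type*} [NormedAddCommGroup H] [InnerProductSpace ℝ H]

theorem integrableOn_inner_of_continuousOn {X : Type*} [TopologicalSpace X] [MeasurableSpace X]
    [OpensMeasurableSpace X] [SecondCountableTopologyEither X H] {μ : Measure X}
    {u g : X → H} {s K : Set X} (hu : ContinuousOn u K) (hg : IntegrableOn g s μ)
    (hK : IsCompact K) (hs : MeasurableSet s) (hsK : s ⊆ K) :
    IntegrableOn (fun x => ⟪u x, g x⟫) s μ := by
  obtain ⟨M, hM⟩ := hK.exists_bound_of_continuousOn hu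
  refine (hg.norm.const_mul M).mono' ?_ ?_
  · exact ((hu.mono hsK).aestronglyMeasurable hs).inner hg.aestronglyMeasurable
  · filter_upwards [ae_restrict_mem hs] with x hx
    calc ‖⟪u x, g x⟫‖ ≤ ‖u x‖ * ‖g x‖ := norm_inner_le_norm _ _
      _ ≤ M * ‖g x‖ := by gcongr; exact hM x (hsK hx)

theorem real_inner_clm_apply_self_le (A : H →L[ℝ] H) (x : H) : ⟪A x, x⟫ ≤ ‖A‖ * ‖x‖ ^ 2 :=
  calc ⟪A x, x⟫ ≤ ‖A x‖ * ‖x‖ := real_inner_le_norm _ _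
    _ ≤ ‖A‖ * ‖x‖ * ‖x‖ := by gcongr; exact A.le_opNorm x
    _ = ‖A‖ * ‖x‖ ^ 2 := by ring

theorem integrable_inner_clm_prod {X : Type*} [MeasurableSpace X] {μ : Measure X} [SFinite μ]
    (A : H →L[ℝ] H) {g : X → H} (hg : Integrable g μ) :
    Integrable (fun p : X × X => ⟪A (g p.1), g p.2⟫) (μ.prod μ) := by
  refine ((hg.norm.const_mul ‖A‖).mul_prod hg.norm).mono' ?_ (.of_forall fun p => ?_)
  · exact (A.continuous.comp_aestronglyMeasurable hg.1.comp_fst).inner hg.1.comp_snd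
  · calc ‖⟪A (g p.1), g p.2⟫‖ ≤ ‖A (g p.1)‖ * ‖g p.2‖ := norm_inner_le_norm _ _
      _ ≤ ‖A‖ * ‖g p.1‖ * ‖g p.2‖ := by gcongr; exact A.le_opNorm _

variable {A : H →L[ℝ] H} {g : ℝ → H} {a b : ℝ}

theorem integrableOn_inner_clm_add_primitive (hg : IntegrableOn g (Icc a b)) (w₀ : H) :
    IntegrableOn (fun τ => ⟪A (w₀ + ∫ σ in Ioc a τ, g σ), g τ⟫) (Ioc a b) :=
  integrableOn_inner_of_continuousOn
    (A.continuous.comp_continuousOn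
      (continuousOn_const.add (intervalIntegral.continuousOn_primitive hg)))
    (hg.mono_set Ioc_subset_Icc_self) isCompact_Icc measurableSet_Ioc Ioc_subset_Icc_self

variable [CompleteSpace H]

theorem integral_inner_clm_apply_left {X : Type*} [MeasurableSpace X] {μ : Measure X}
    (A : H →L[ℝ] H) {g : X → H} (hg : Integrable g μ) (c : H) :
    ∫ x, ⟪A (g x), c⟫ ∂μ = ⟪A (∫ x, g x ∂μ), c⟫ := by
  simp_rw [real_inner_comm c]
  rw [integral_inner (A.integrable_comp hg), A.integral_comp_comm hg]

theorem integral_indicator_le_inner_clm_prod (hg : IntegrableOn g (Ioc a b)) :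
    ∫ p, {p : ℝ × ℝ | p.1 ≤ p.2}.indicator (fun p => ⟪A (g p.1), g p.2⟫) p
        ∂((volume.restrict (Ioc a b)).prod (volume.restrict (Ioc a b)))
      = ∫ τ in Ioc a b, ⟪A (∫ σ in Ioc a τ, g σ), g τ⟫ := by
  rw [integral_prod_symm _ ((integrable_inner_clm_prod A hg).indicator
    (measurableSet_le measurable_fst measurable_snd))]
  refine setIntegral_congr_fun measurableSet_Ioc fun τ hτ => ?_
  change ∫ σ in Ioc a b, (Iic τ).indicator (fun σ => ⟪A (g σ), g τ⟫) σ = _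
  rw [integral_indicator measurableSet_Iic, Measure.restrict_restrict measurableSet_Iic,
    Iic_inter_Ioc_of_le hτ.2]
  exact integral_inner_clm_apply_left A (hg.mono_set (Ioc_subset_Ioc_right hτ.2)) _

theorem integral_indicator_lt_inner_clm_prod (hg : IntegrableOn g (Ioc a b)) :
    ∫ p, {p : ℝ × ℝ | p.2 < p.1}.indicator (fun p => ⟪A (g p.1), g p.2⟫) p
        ∂((volume.restrict (Ioc a b)).prod (volume.restrict (Ioc a b)))
      = ∫ σ in Ioc a b, ⟪A (g σ), ∫ τ in Ioc a σ, g τ⟫ := by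
  rw [integral_prod _ ((integrable_inner_clm_prod A hg).indicator
    (measurableSet_lt measurable_snd measurable_fst))]
  refine setIntegral_congr_fun measurableSet_Ioc fun σ hσ => ?_
  change ∫ τ in Ioc a b, (Iio σ).indicator (fun τ => ⟪A (g σ), g τ⟫) τ = _
  have hIoo : Iio σ ∩ Ioc a b = Ioo a σ :=
    Set.ext fun τ => ⟨fun h => ⟨h.2.1, h.1⟩, fun h => ⟨h.2, h.1, h.2.le.trans hσ.2⟩⟩
  rw [integral_indicator measurableSet_Iio, Measure.restrict_restrict measurableSet_Iio, hIoo,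
    ← integral_Ioc_eq_integral_Ioo]
  exact integral_inner (hg.mono_set (Ioc_subset_Ioc_right hσ.2)) _

theorem two_mul_integral_inner_clm_primitive (hA : ∀ x y : H, ⟪A x, y⟫ = ⟪x, A y⟫)
    (hg : IntegrableOn g (Ioc a b)) :
    2 * ∫ τ in Ioc a b, ⟪A (∫ σ in Ioc a τ, g σ), g τ⟫
      = ⟪A (∫ σ in Ioc a b, g σ), ∫ σ in Ioc a b, g σ⟫ := by
  have hK := integrable_inner_clm_prod A hg
  have hs : MeasurableSet {p : ℝ × ℝ | p.1 ≤ p.2} := measurableSet_le measurable_fst measurable_snd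
  have hsc : {p : ℝ × ℝ | p.1 ≤ p.2}ᶜ = {p | p.2 < p.1} := by ext; simp
  have hfull : ∫ p, ⟪A (g p.1), g p.2⟫
        ∂((volume.restrict (Ioc a b)).prod (volume.restrict (Ioc a b)))
      = ⟪A (∫ σ in Ioc a b, g σ), ∫ σ in Ioc a b, g σ⟫ := by
    rw [integral_prod _ hK]
    simp_rw [integral_inner hg]
    exact integral_inner_clm_apply_left A hg _
  rw [← integral_add_compl hs hK, ← integral_indicator hs, ← integral_indicator hs.compl, hsc,
    integral_indicator_le_inner_clm_prod hg, integral_indicator_lt_inner_clm_prod hg] at hfull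
  have hsymm : ∫ σ in Ioc a b, ⟪A (g σ), ∫ τ in Ioc a σ, g τ⟫
      = ∫ τ in Ioc a b, ⟪A (∫ σ in Ioc a τ, g σ), g τ⟫ := by
    congr 1 with σ
    rw [hA, real_inner_comm]
  linarith

theorem two_mul_integral_inner_clm_add_primitive (hA : ∀ x y : H, ⟪A x, y⟫ = ⟪x, A y⟫)
    (hg : IntegrableOn g (Icc a b)) (w₀ : H) :
    2 * ∫ τ in Ioc a b, ⟪A (w₀ + ∫ σ in Ioc a τ, g σ), g τ⟫
      = ⟪A (w₀ + ∫ σ in Ioc a b, g σ), w₀ + ∫ σ in Ioc a b, g σ⟫ - ⟪A w₀, w₀⟫ := by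
  have hg' := hg.mono_set Ioc_subset_Icc_self
  have hprim := two_mul_integral_inner_clm_primitive hA hg'
  have hsplit : ∫ τ in Ioc a b, ⟪A (w₀ + ∫ σ in Ioc a τ, g σ), g τ⟫
      = ⟪A w₀, ∫ σ in Ioc a b, g σ⟫ + ∫ τ in Ioc a b, ⟪A (∫ σ in Ioc a τ, g σ), g τ⟫ := by
    have hW : IntegrableOn (fun τ => ⟪A (∫ σ in Ioc a τ, g σ), g τ⟫) (Ioc a b) := by
      simpa using integrableOn_inner_clm_add_primitive (A := A) hg 0
    simp_rw [map_add, inner_add_left]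
    rw [integral_add (hg'.const_inner _) hW, integral_inner hg']
  have hcross : ⟪A (∫ σ in Ioc a b, g σ), w₀⟫ = ⟪A w₀, ∫ σ in Ioc a b, g σ⟫ := by
    rw [hA, real_inner_comm]
  rw [hsplit]
  simp only [map_add, inner_add_left, inner_add_right, hcross]
  linarith

theorem integral_norm_sq_le_of_ae_le_neg_inner_primitive (hA : ∀ x y : H, ⟪A x, y⟫ = ⟪x, A y⟫)
    (hApos : ∀ x : H, 0 ≤ ⟪A x, x⟫) {α : ℝ} (hα : 0 < α) (hg : IntegrableOn g (Icc a b))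
    {w₀ : H} (hle : ∀ᵐ τ ∂volume.restrict (Ioc a b),
      α * ‖g τ‖ ^ 2 ≤ -⟪A (w₀ + ∫ σ in Ioc a τ, g σ), g τ⟫) :
    ∫ τ in Ioc a b, ‖g τ‖ ^ 2 ≤ ‖A‖ / (2 * α) * ‖w₀‖ ^ 2 := by
  have hφ := integrableOn_inner_clm_add_primitive (A := A) hg w₀
  have hg2 : IntegrableOn (fun τ => ‖g τ‖ ^ 2) (Ioc a b) := by
    refine (hφ.neg.div_const α).mono'
      ((hg.mono_set Ioc_subset_Icc_self).aestronglyMeasurable.norm.pow 2) ?_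
    filter_upwards [hle] with τ hτ
    rw [Real.norm_of_nonneg (by positivity), Pi.neg_apply, le_div_iff₀ hα]
    linarith
  have hest : α * ∫ τ in Ioc a b, ‖g τ‖ ^ 2 ≤ ‖A‖ * ‖w₀‖ ^ 2 / 2 :=
    calc α * ∫ τ in Ioc a b, ‖g τ‖ ^ 2 = ∫ τ in Ioc a b, α * ‖g τ‖ ^ 2 :=
          (integral_const_mul _ _).symm
      _ ≤ ∫ τ in Ioc a b, -⟪A (w₀ + ∫ σ in Ioc a τ, g σ), g τ⟫ :=
          integral_mono_ae (hg2.const_mul α) hφ.neg hle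
      _ ≤ ⟪A w₀, w₀⟫ / 2 := by
          rw [integral_neg]
          linarith [two_mul_integral_inner_clm_add_primitive hA hg w₀,
            hApos (w₀ + ∫ σ in Ioc a b, g σ)]
      _ ≤ ‖A‖ * ‖w₀‖ ^ 2 / 2 := by linarith [real_inner_clm_apply_self_le A w₀]
  rw [div_mul_eq_mul_div, le_div_iff₀ (by positivity)]
  linarith

end

namespace SweepSol

variable {H : Type*} [NormedAddCommGroup H] [InnerProductSpace ℝ H]
  {T : ℝ} {A₀ A₁ : H →L[ℝ] H} {f : ℝ → H} {C : ℝ → Set H} {x₀ y₀ : H} {x y vx vy : ℝ → H}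

theorem sub_eq_add_integral (hx : SweepSol T A₀ A₁ f C x₀ x vx)
    (hy : SweepSol T A₀ A₁ f C y₀ y vy) {t : ℝ} (ht : t ∈ Icc 0 T) :
    x t - y t = x₀ - y₀ + ∫ τ in Ioc 0 t, (vx τ - vy τ) := by
  have hsub : Ioc 0 t ⊆ Icc 0 T := Ioc_subset_Icc_self.trans (Icc_subset_Icc_right ht.2)
  rw [hx.2.1 t ht, hy.2.1 t ht, intervalIntegral.integral_of_le ht.1,
    intervalIntegral.integral_of_le ht.1, integral_sub (hx.1.mono_set hsub) (hy.1.mono_set hsub)]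
  abel

theorem ae_mul_norm_sub_sq_le (hx : SweepSol T A₀ A₁ f C x₀ x vx)
    (hy : SweepSol T A₀ A₁ f C y₀ y vy) {α₁ : ℝ} (hcoer : ∀ x : H, α₁ * ‖x‖ ^ 2 ≤ ⟪A₁ x, x⟫) :
    ∀ᵐ t ∂volume.restrict (Icc 0 T), α₁ * ‖vx t - vy t‖ ^ 2
      ≤ -⟪A₀ (x₀ - y₀ + ∫ τ in Ioc 0 t, (vx τ - vy τ)), vx t - vy t⟫ := by
  filter_upwards [hx.2.2, hy.2.2, ae_restrict_mem measurableSet_Icc]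
    with t ⟨hvx, hVIx⟩ ⟨hvy, hVIy⟩ ht
  have hmono : 0 ≤ ⟪A₁ (vx t) + A₀ (x t) - f t, vy t - vx t⟫
      + ⟪A₁ (vy t) + A₀ (y t) - f t, vx t - vy t⟫ := add_nonneg (hVIx _ hvy) (hVIy _ hvx)
  have hexpand : ⟪A₁ (vx t) + A₀ (x t) - f t, vy t - vx t⟫
      + ⟪A₁ (vy t) + A₀ (y t) - f t, vx t - vy t⟫
      = -(⟪A₁ (vx t - vy t), vx t - vy t⟫ + ⟪A₀ (x t - y t), vx t - vy t⟫) := by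
    simp only [map_sub, inner_sub_left, inner_add_left, inner_sub_right]
    ring
  rw [← sub_eq_add_integral hx hy ht]
  linarith [hcoer (vx t - vy t)]

end SweepSol

theorem derivative_L2_estimate_A1_coercive_general
    {H : Type*} [NormedAddCommGroup H] [InnerProductSpace ℝ H] [CompleteSpace H]
    (T : ℝ) (A₀ A₁ : H →L[ℝ] H)
    (hA₀sym : ∀ x y : H, ⟪A₀ x, y⟫ = ⟪x, A₀ y⟫)
    (hA₀pos : ∀ x : H, 0 ≤ ⟪A₀ x, x⟫)
    (f : ℝ → H)
    (C : ℝ → Set H)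
    (α₁ : ℝ) (hα₁ : 0 < α₁)
    (hcoer : ∀ x : H, α₁ * ‖x‖ ^ 2 ≤ ⟪A₁ x, x⟫)
    (x₀ y₀ : H)
    (x y vx vy : ℝ → H)
    (hx : SweepSol T A₀ A₁ f C x₀ x vx)
    (hy : SweepSol T A₀ A₁ f C y₀ y vy) :
    ∀ t ∈ Icc (0:ℝ) T,
      (∫ τ in (0:ℝ)..t, ‖vx τ - vy τ‖ ^ 2) ≤ ‖A₀‖ / (2 * α₁) * ‖x₀ - y₀‖ ^ 2 := by
  intro t ht
  have hIcc : Icc 0 t ⊆ Icc 0 T := Icc_subset_Icc_right ht.2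
  rw [intervalIntegral.integral_of_le ht.1]
  exact integral_norm_sq_le_of_ae_le_neg_inner_primitive hA₀sym hA₀pos hα₁
    ((hx.1.sub hy.1).mono_set hIcc)
    (ae_restrict_of_ae_restrict_of_subset (Ioc_subset_Icc_self.trans hIcc)
      (hx.ae_mul_norm_sub_sq_le hy hcoer))

theorem derivative_L2_estimate_A1_coercive
    {H : Type*} [NormedAddCommGroup H] [InnerProductSpace ℝ H] [CompleteSpace H]
    (T : ℝ) (hT : 0 < T) (A₀ A₁ : H →L[ℝ] H)
    (hA₀sym : ∀ x y : H, ⟪A₀ x, y⟫ = ⟪x, A₀ y⟫)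
    (hA₁sym : ∀ x y : H, ⟪A₁ x, y⟫ = ⟪x, A₁ y⟫)
    (hA₀pos : ∀ x : H, 0 ≤ ⟪A₀ x, x⟫)
    (hA₁pos : ∀ x : H, 0 ≤ ⟪A₁ x, x⟫)
    (f : ℝ → H) (hf : ContinuousOn f (Icc 0 T))
    (C : ℝ → Set H)
    (hC : ∀ t ∈ Icc (0:ℝ) T, (C t).Nonempty ∧ Convex ℝ (C t))
    (α₁ : ℝ) (hα₁ : 0 < α₁)
    (hcoer : ∀ x : H, α₁ * ‖x‖ ^ 2 ≤ ⟪A₁ x, x⟫)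
    (x₀ y₀ : H) (hx₀ : x₀ ∈ C 0) (hy₀ : y₀ ∈ C 0)
    (x y vx vy : ℝ → H)
    (hx : SweepSol T A₀ A₁ f C x₀ x vx)
    (hy : SweepSol T A₀ A₁ f C y₀ y vy) :
    ∀ t ∈ Icc (0:ℝ) T,
      (∫ τ in (0:ℝ)..t, ‖vx τ - vy τ‖ ^ 2) ≤ ‖A₀‖ / (2 * α₁) * ‖x₀ - y₀‖ ^ 2 :=
  derivative_L2_estimate_A1_coercive_general T A₀ A₁ hA₀sym hA₀pos f C α₁ hα₁ hcoer x₀ y₀ x y vx vy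
    hx hy
end

section
/- Suppose C(t) is nonempty and convex for every t ∈ [0,T]. If x and y are solutions of the sweeping process (P) with initial values x₀ ∈ C(0) and y₀ ∈ C(0) respectively, then for every t ∈ [0,T]: ⟨A₀(x(t) − y(t)), x(t) − y(t)⟩ ≤ ⟨A₀(x₀ − y₀), x₀ − y₀⟩. -/
/-! The difference `w = x - y` is absolutely continuous with derivative `vx - vy`, so the energy
`q = ⟪A₀ w, w⟫` is absolutely continuous with derivative `2 ⟪A₀ w, vx - vy⟫` a.e. (`A₀` is
symmetric). Testing the variational inequality of `x` with `z = vy` and that of `y` with `z = vx`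
and adding gives `⟪A₁ (vx - vy), vx - vy⟫ + ⟪A₀ w, vx - vy⟫ ≤ 0`, so `q' ≤ 0` a.e. because `A₁`
is positive, and the fundamental theorem of calculus for absolutely continuous functions shows
that `q` is nonincreasing. -/

open MeasureTheory Set
open scoped RealInnerProductSpace

open Filter

namespace AbsolutelyContinuousOnInterval

variable {X Y : Type*} [PseudoMetricSpace X] [PseudoMetricSpace Y] {a b : ℝ}

theorem of_dist_le_mul {f : ℝ → X} {g : ℝ → Y} (K : ℝ)
    (hg : AbsolutelyContinuousOnInterval g a b)
    (hfg : ∀ x ∈ uIcc a b, ∀ y ∈ uIcc a b, dist (f x) (f y) ≤ K * dist (g x) (g y)) :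
    AbsolutelyContinuousOnInterval f a b := by
  unfold AbsolutelyContinuousOnInterval at hg
  apply squeeze_zero' ?_ ?_ (by simpa using hg.const_mul K)
  · exact Eventually.of_forall fun _ ↦ Finset.sum_nonneg fun _ _ ↦ dist_nonneg
  rw [eventually_inf_principal]
  filter_upwards with E hE
  rw [Finset.mul_sum]
  exact Finset.sum_le_sum fun i hi ↦ hfg _ (hE.1 i hi).1 _ (hE.1 i hi).2

end AbsolutelyContinuousOnInterval

theorem LipschitzWith.comp_absolutelyContinuousOnInterval {X Y : Type*} [PseudoMetricSpace X]
    [PseudoMetricSpace Y] {K : NNReal} {φ : X → Y} {f : ℝ → X} {a b : ℝ}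
    (hφ : LipschitzWith K φ) (hf : AbsolutelyContinuousOnInterval f a b) :
    AbsolutelyContinuousOnInterval (φ ∘ f) a b :=
  hf.of_dist_le_mul K fun x _ y _ ↦ hφ.dist_le_mul (f x) (f y)

theorem IntervalIntegrable.absolutelyContinuousOnInterval_integral
    {E : Type*} [NormedAddCommGroup E] [NormedSpace ℝ E] {f : ℝ → E} {a b c : ℝ}
    (hf : IntervalIntegrable f volume a b) (hc : c ∈ uIcc a b) :
    AbsolutelyContinuousOnInterval (fun x ↦ ∫ t in c..x, f t) a b := by
  refine (hf.norm.absolutelyContinuousOnInterval_intervalIntegral hc).of_dist_le_mul 1 ?_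
  intro x hx y hy
  have hcx := hf.mono_set (uIcc_subset_uIcc hc hx)
  have hcy := hf.mono_set (uIcc_subset_uIcc hc hy)
  rw [one_mul, dist_eq_norm, dist_eq_norm, intervalIntegral.integral_interval_sub_left hcx hcy,
    intervalIntegral.integral_interval_sub_left hcx.norm hcy.norm, Real.norm_eq_abs]
  exact intervalIntegral.norm_integral_le_abs_integral_norm

section InnerProductSpace

variable {H : Type*} [NormedAddCommGroup H] [InnerProductSpace ℝ H]

theorem dist_inner_inner_le (a b c d : H) :
    dist ⟪a, b⟫ ⟪c, d⟫ ≤ ‖b‖ * dist a c + ‖c‖ * dist b d := by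
  have : ⟪a, b⟫ - ⟪c, d⟫ = ⟪a - c, b⟫ + ⟪c, b - d⟫ := by
    rw [inner_sub_left, inner_sub_right]; ring
  rw [Real.dist_eq, this, dist_eq_norm, dist_eq_norm]
  refine (abs_add_le _ _).trans (add_le_add ?_ ?_)
  · exact (abs_real_inner_le_norm _ _).trans_eq (mul_comm _ _)
  · exact abs_real_inner_le_norm _ _

theorem AbsolutelyContinuousOnInterval.inner {f g : ℝ → H} {a b : ℝ}
    (hf : AbsolutelyContinuousOnInterval f a b) (hg : AbsolutelyContinuousOnInterval g a b) :
    AbsolutelyContinuousOnInterval (fun x ↦ ⟪f x, g x⟫) a b := by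
  obtain ⟨C, hC⟩ := hf.exists_bound
  obtain ⟨D, hD⟩ := hg.exists_bound
  unfold AbsolutelyContinuousOnInterval at hf hg ⊢
  apply squeeze_zero' ?_ ?_ (by simpa using (hf.const_mul D).add (hg.const_mul C))
  · exact Eventually.of_forall fun _ ↦ Finset.sum_nonneg fun _ _ ↦ dist_nonneg
  rw [eventually_inf_principal]
  filter_upwards with E hE
  simp only [Finset.mul_sum, ← Finset.sum_add_distrib]
  gcongr with i hi
  refine (dist_inner_inner_le _ _ _ _).trans (add_le_add ?_ ?_)
  · exact mul_le_mul_of_nonneg_right (hD _ (hE.1 i hi).1) dist_nonneg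
  · exact mul_le_mul_of_nonneg_right (hC _ (hE.1 i hi).2) dist_nonneg

theorem AbsolutelyContinuousOnInterval.antitoneOn_of_ae_deriv_nonpos {f : ℝ → ℝ} {a b : ℝ}
    (hf : AbsolutelyContinuousOnInterval f a b)
    (hf' : ∀ᵐ x, x ∈ Icc a b → deriv f x ≤ 0) :
    AntitoneOn f (Icc a b) := by
  intro x hx y hy hxy
  have hsub : uIcc x y ⊆ uIcc a b := by
    rw [uIcc_of_le hxy, uIcc_of_le (hx.1.trans hx.2)]; exact Icc_subset_Icc hx.1 hy.2
  have hint : ∫ t in x..y, deriv f t ≤ 0 := by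
    rw [intervalIntegral.integral_of_le hxy]
    refine integral_nonpos_of_ae ((ae_restrict_iff' measurableSet_Ioc).2 ?_)
    filter_upwards [hf'] with t ht htxy using ht ⟨hx.1.trans htxy.1.le, htxy.2.trans hy.2⟩
  linarith [(hf.mono hsub).integral_deriv_eq_sub]

theorem inner_sub_nonpos_of_variational_inequalities {A₀ A₁ : H →L[ℝ] H}
    (hA₁ : ∀ z, 0 ≤ ⟪A₁ z, z⟫) {u u' v v' g : H}
    (hv : 0 ≤ ⟪A₁ v + A₀ u - g, v' - v⟫) (hv' : 0 ≤ ⟪A₁ v' + A₀ u' - g, v - v'⟫) :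
    ⟪A₀ (u - u'), v - v'⟫ ≤ 0 := by
  have hsum : ⟪A₁ v + A₀ u - g, v' - v⟫ + ⟪A₁ v' + A₀ u' - g, v - v'⟫
      = -(⟪A₁ (v - v'), v - v'⟫ + ⟪A₀ (u - u'), v - v'⟫) := by
    simp only [map_sub, inner_sub_left, inner_sub_right, inner_add_left]
    ring
  linarith [hA₁ (v - v')]

theorem HasDerivAt.inner_map_self {A : H →L[ℝ] H} (hA : ∀ x y, ⟪A x, y⟫ = ⟪x, A y⟫)
    {w : ℝ → H} {w' : H} {τ : ℝ} (hw : HasDerivAt w w' τ) :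
    HasDerivAt (fun s ↦ ⟪A (w s), w s⟫) (2 * ⟪A (w τ), w'⟫) τ := by
  refine ((A.hasFDerivAt.comp_hasDerivAt τ hw).inner ℝ hw).congr_deriv ?_
  simp only [Function.comp_apply]
  rw [hA, real_inner_comm]
  ring

namespace SweepSol

variable {T : ℝ} {A₀ A₁ : H →L[ℝ] H} {f : ℝ → H} {C : ℝ → Set H} {x₀ y₀ : H} {x y vx vy : ℝ → H}

theorem intervalIntegrable_s3 (hx : SweepSol T A₀ A₁ f C x₀ x vx) {t : ℝ} (ht : t ∈ Icc 0 T) :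
    IntervalIntegrable vx volume 0 t :=
  (intervalIntegrable_iff_integrableOn_Icc_of_le ht.1).2
    (hx.1.mono_set (Icc_subset_Icc_right ht.2))

theorem sub_eq (hx : SweepSol T A₀ A₁ f C x₀ x vx) (hy : SweepSol T A₀ A₁ f C y₀ y vy)
    {t : ℝ} (ht : t ∈ Icc 0 T) :
    x t - y t = x₀ - y₀ + ∫ τ in (0:ℝ)..t, (vx τ - vy τ) := by
  rw [hx.2.1 t ht, hy.2.1 t ht,
    intervalIntegral.integral_sub (hx.intervalIntegrable_s3 ht) (hy.intervalIntegrable_s3 ht)]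
  abel

theorem ae_inner_sub_nonpos (hA₁ : ∀ z, 0 ≤ ⟪A₁ z, z⟫)
    (hx : SweepSol T A₀ A₁ f C x₀ x vx) (hy : SweepSol T A₀ A₁ f C y₀ y vy) :
    ∀ᵐ t, t ∈ Icc 0 T → ⟪A₀ (x t - y t), vx t - vy t⟫ ≤ 0 := by
  rw [← ae_restrict_iff' measurableSet_Icc]
  filter_upwards [hx.2.2, hy.2.2] with t ⟨hxC, hxVI⟩ ⟨hyC, hyVI⟩
  exact inner_sub_nonpos_of_variational_inequalities hA₁ (hxVI _ hyC) (hyVI _ hxC)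

end SweepSol

end InnerProductSpace

theorem quadratic_form_monotone_along_solutions_general
    {H : Type*} [NormedAddCommGroup H] [InnerProductSpace ℝ H] [CompleteSpace H]
    (T : ℝ) (A₀ A₁ : H →L[ℝ] H)
    (hA₀sym : ∀ x y : H, ⟪A₀ x, y⟫ = ⟪x, A₀ y⟫)
    (hA₁pos : ∀ x : H, 0 ≤ ⟪A₁ x, x⟫)
    (f : ℝ → H)
    (C : ℝ → Set H)
    (x₀ y₀ : H)
    (x y vx vy : ℝ → H)
    (hx : SweepSol T A₀ A₁ f C x₀ x vx)
    (hy : SweepSol T A₀ A₁ f C y₀ y vy) :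
    ∀ t ∈ Icc (0:ℝ) T,
      ⟪A₀ (x t - y t), x t - y t⟫ ≤ ⟪A₀ (x₀ - y₀), x₀ - y₀⟫ := by
  intro t ht
  have hT : 0 ≤ T := ht.1.trans ht.2
  set w : ℝ → H := fun τ ↦ x₀ - y₀ + ∫ σ in (0:ℝ)..τ, (vx σ - vy σ)
  have hxy : ∀ τ ∈ Icc 0 T, x τ - y τ = w τ := fun τ hτ ↦ hx.sub_eq hy hτ
  have hv : IntervalIntegrable (fun σ ↦ vx σ - vy σ) volume 0 T :=
    (hx.intervalIntegrable_s3 (right_mem_Icc.2 hT)).sub (hy.intervalIntegrable_s3 (right_mem_Icc.2 hT))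
  have hwAC : AbsolutelyContinuousOnInterval w 0 T :=
    (IsometryEquiv.addLeft (x₀ - y₀)).isometry.lipschitz.comp_absolutelyContinuousOnInterval
      (hv.absolutelyContinuousOnInterval_integral left_mem_uIcc)
  have hqAC : AbsolutelyContinuousOnInterval (fun τ ↦ ⟪A₀ (w τ), w τ⟫) 0 T :=
    (A₀.lipschitz.comp_absolutelyContinuousOnInterval hwAC).inner hwAC
  have hq' : ∀ᵐ τ, τ ∈ Icc 0 T → deriv (fun τ ↦ ⟪A₀ (w τ), w τ⟫) τ ≤ 0 := by
    filter_upwards [hv.ae_hasDerivAt_integral, hx.ae_inner_sub_nonpos hA₁pos hy]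
      with τ hderiv hnonpos hτ
    have hw' : HasDerivAt w (vx τ - vy τ) τ :=
      (hderiv (uIcc_of_le hT ▸ hτ) 0 left_mem_uIcc).const_add (x₀ - y₀)
    rw [(hw'.inner_map_self hA₀sym).deriv, ← hxy τ hτ]
    linarith [hnonpos hτ]
  simpa [hxy t ht, w] using
    hqAC.antitoneOn_of_ae_deriv_nonpos hq' (left_mem_Icc.2 hT) ht ht.1

theorem quadratic_form_monotone_along_solutions
    {H : Type*} [NormedAddCommGroup H] [InnerProductSpace ℝ H] [CompleteSpace H]
    (T : ℝ) (hT : 0 < T) (A₀ A₁ : H →L[ℝ] H)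
    (hA₀sym : ∀ x y : H, ⟪A₀ x, y⟫ = ⟪x, A₀ y⟫)
    (hA₁sym : ∀ x y : H, ⟪A₁ x, y⟫ = ⟪x, A₁ y⟫)
    (hA₀pos : ∀ x : H, 0 ≤ ⟪A₀ x, x⟫)
    (hA₁pos : ∀ x : H, 0 ≤ ⟪A₁ x, x⟫)
    (f : ℝ → H) (hf : ContinuousOn f (Icc 0 T))
    (C : ℝ → Set H)
    (hC : ∀ t ∈ Icc (0:ℝ) T, (C t).Nonempty ∧ Convex ℝ (C t))
    (x₀ y₀ : H) (hx₀ : x₀ ∈ C 0) (hy₀ : y₀ ∈ C 0)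
    (x y vx vy : ℝ → H)
    (hx : SweepSol T A₀ A₁ f C x₀ x vx)
    (hy : SweepSol T A₀ A₁ f C y₀ y vy) :
    ∀ t ∈ Icc (0:ℝ) T,
      ⟪A₀ (x t - y t), x t - y t⟫ ≤ ⟪A₀ (x₀ - y₀), x₀ - y₀⟫ :=
  quadratic_form_monotone_along_solutions_general T A₀ A₁ hA₀sym hA₁pos f C x₀ y₀ x y vx vy hx hy
end

section
/- Let f : [0,T] → ℝ be a Lebesgue-integrable function and let a, b be real constants with b ≠ 0. If f(t) ≤ a + b·∫₀ᵗ f(τ) dτ for almost every t ∈ [0,T], then ∫₀ᵗ f(τ) dτ ≤ (a/b)·(exp(bt) − 1) for all t ∈ [0,T]. -/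
/-!
The primitive `F t = ∫₀ᵗ f` is absolutely continuous with `F' = f` almost everywhere, so
`F' ≤ b F + a` a.e. If `φ` solves `φ' = b φ + a`, `φ 0 = F 0 = 0` (Mathlib's `gronwallBound`),
then `exp (-b t) (F t - φ t)` is absolutely continuous with nonpositive derivative a.e., and the
fundamental theorem of calculus for absolutely continuous functions shows that it is
nonincreasing; hence `F ≤ φ`.
-/

open MeasureTheory Set

namespace AbsolutelyContinuousOnInterval

theorem le_of_ae_deriv_nonpos {g : ℝ → ℝ} {a b : ℝ} (hg : AbsolutelyContinuousOnInterval g a b)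
    (hab : a ≤ b) (hg' : ∀ᵐ x, x ∈ Icc a b → deriv g x ≤ 0) : g b ≤ g a := by
  have hint : ∫ x in a..b, deriv g x ≤ ∫ _ in a..b, (0 : ℝ) :=
    intervalIntegral.integral_mono_ae_restrict hab hg.intervalIntegrable_deriv
      intervalIntegrable_const <| (ae_restrict_iff' measurableSet_Icc).2 hg'
  rw [hg.integral_deriv_eq_sub, intervalIntegral.integral_zero] at hint
  linarith

theorem le_gronwallBound_of_ae_deriv_le {u : ℝ → ℝ} {a b K ε : ℝ}
    (hu : AbsolutelyContinuousOnInterval u a b) (hab : a ≤ b)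
    (hu' : ∀ᵐ x, x ∈ Icc a b → deriv u x ≤ K * u x + ε) :
    u b ≤ gronwallBound (u a) K ε (b - a) := by
  set φ : ℝ → ℝ := fun x => gronwallBound (u a) K ε (x - a)
  set e : ℝ → ℝ := fun x => Real.exp (-K * (x - a))
  have hφ x : HasDerivAt φ (K * φ x + ε) x := hasDerivAt_gronwallBound_shift _ _ _ x a
  have he x : HasDerivAt e (e x * -K) x := by
    simpa only [mul_one] using (((hasDerivAt_id' x).sub_const a).const_mul (-K)).exp
  have hφ_ac : AbsolutelyContinuousOnInterval φ a b :=
    ContDiffOn.absolutelyContinuousOnInterval <| ContDiff.contDiffOn <|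
      contDiff_one_iff_deriv.2 ⟨fun x => (hφ x).differentiableAt, by
        rw [funext fun x => (hφ x).deriv]
        exact (continuous_const.mul (continuous_iff_continuousAt.2
          fun x => (hφ x).continuousAt)).add continuous_const⟩
  have he_ac : AbsolutelyContinuousOnInterval e a b :=
    ContDiffOn.absolutelyContinuousOnInterval (by fun_prop)
  have hdecay : ∀ᵐ x, x ∈ Icc a b → deriv (e * (u - φ)) x ≤ 0 := by
    filter_upwards [hu.ae_differentiableAt, hu'] with x hdiff hle hx
    rw [uIcc_of_le hab] at hdiff
    rw [((he x).mul ((hdiff hx).hasDerivAt.sub (hφ x))).deriv]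
    have := mul_le_mul_of_nonneg_left (hle hx) (Real.exp_pos (-K * (x - a))).le
    simp only [Pi.sub_apply, e]
    linarith
  have key := le_of_ae_deriv_nonpos (he_ac.mul (hu.sub hφ_ac)) hab hdecay
  simp only [Pi.mul_apply, Pi.sub_apply, φ, sub_self, gronwallBound_x0, mul_zero] at key
  have heb : 0 < e b := Real.exp_pos _
  nlinarith

end AbsolutelyContinuousOnInterval

theorem gronwall_type_lemma_general
    (T : ℝ) (f : ℝ → ℝ) (hf : IntegrableOn f (Icc 0 T))
    (a b : ℝ) (hb : b ≠ 0)
    (h : ∀ᵐ t ∂(volume.restrict (Icc (0:ℝ) T)),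
      f t ≤ a + b * ∫ τ in (0:ℝ)..t, f τ) :
    ∀ t ∈ Icc (0:ℝ) T, (∫ τ in (0:ℝ)..t, f τ) ≤ a / b * (Real.exp (b * t) - 1) := by
  intro t ⟨ht0, htT⟩
  have hfi : IntervalIntegrable f volume 0 t :=
    (intervalIntegrable_iff_integrableOn_Icc_of_le ht0).2 (hf.mono_set (Icc_subset_Icc_right htT))
  have hF := hfi.absolutelyContinuousOnInterval_intervalIntegral (left_mem_uIcc (a := 0) (b := t))
  have hF' : ∀ᵐ s, s ∈ Icc 0 t → deriv (fun x => ∫ τ in (0:ℝ)..x, f τ) s ≤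
      b * (∫ τ in (0:ℝ)..s, f τ) + a := by
    filter_upwards [hfi.ae_hasDerivAt_integral, (ae_restrict_iff' measurableSet_Icc).1 h]
      with s hderiv hs hsI
    rw [uIcc_of_le ht0] at hderiv
    rw [(hderiv hsI 0 (left_mem_Icc.2 ht0)).deriv]
    linarith [hs (Icc_subset_Icc_right htT hsI)]
  simpa [gronwallBound_of_K_ne_0 hb] using hF.le_gronwallBound_of_ae_deriv_le ht0 hF'

theorem gronwall_type_lemma
    (T : ℝ) (hT : 0 < T) (f : ℝ → ℝ) (hf : IntegrableOn f (Icc 0 T))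
    (a b : ℝ) (hb : b ≠ 0)
    (h : ∀ᵐ t ∂(volume.restrict (Icc (0:ℝ) T)),
      f t ≤ a + b * ∫ τ in (0:ℝ)..t, f τ) :
    ∀ t ∈ Icc (0:ℝ) T, (∫ τ in (0:ℝ)..t, f τ) ≤ a / b * (Real.exp (b * t) - 1) :=
  gronwall_type_lemma_general T f hf a b hb h
end

section
/- Suppose C(t) is nonempty and convex for every t ∈ [0,T], there exists a continuous function g : [0,T] → ℝ such that d_H(C(s), C(t)) ≤ |g(s) − g(t)| for all s, t ∈ [0,T] (where d_H is the Hausdorff distance: every point of C(s) lies within distance |g(s)−g(t)| of C(t) and vice versa), and there exist positive constants c₁, c₂ such that ⟨A₁ x, x⟩ ≥ c₁‖x‖² − c₂ for all x ∈ C(0). Then for every u₀ ∈ C(0) there exists M > 0 such that every solution u of the sweeping process (P) with initial value u₀, with Bochner-integrable derivative v, satisfies ‖u(t)‖ ≤ M for all t ∈ [0,T] and ∫₀ᵀ ‖v(τ)‖ dτ ≤ M; i.e., the solution set Sol(P,u₀) is bounded in C⁰([0,T],H) and in W^{1,1}([0,T],H). -/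
open MeasureTheory Set
open scoped RealInnerProductSpace

private lemma quad_aux {c x a b : ℝ} (hc : 0 < c) (hx : 0 ≤ x) (ha : 0 ≤ a) (hb : 0 ≤ b)
    (h : c * x ^ 2 ≤ a + b * x) : x ≤ 1 + (a + b) / c := by
  rcases le_or_gt x 1 with h1 | h1
  · have h2 : 0 ≤ (a + b) / c := by positivity
    linarith
  · have h2 : x * c ≤ a + b := by nlinarith
    have h3 : x ≤ (a + b) / c := (le_div_iff₀ hc).mpr h2
    linarith

set_option maxHeartbeats 2000000 in
theorem boundedness_sol_semicoercive_Hausdorff_continuous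
    {H : Type*} [NormedAddCommGroup H] [InnerProductSpace ℝ H] [CompleteSpace H]
    (T : ℝ) (hT : 0 < T) (A₀ A₁ : H →L[ℝ] H)
    (hA₀sym : ∀ x y : H, ⟪A₀ x, y⟫ = ⟪x, A₀ y⟫)
    (hA₁sym : ∀ x y : H, ⟪A₁ x, y⟫ = ⟪x, A₁ y⟫)
    (hA₀pos : ∀ x : H, 0 ≤ ⟪A₀ x, x⟫)
    (hA₁pos : ∀ x : H, 0 ≤ ⟪A₁ x, x⟫)
    (f : ℝ → H) (hf : ContinuousOn f (Icc 0 T))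
    (C : ℝ → Set H)
    (hC : ∀ t ∈ Icc (0:ℝ) T, (C t).Nonempty ∧ Convex ℝ (C t))
    (g : ℝ → ℝ) (hg : ContinuousOn g (Icc 0 T))
    (hHaus : ∀ s ∈ Icc (0:ℝ) T, ∀ t ∈ Icc (0:ℝ) T,
      ∀ x ∈ C s, Metric.infDist x (C t) ≤ |g s - g t|)
    (c₁ c₂ : ℝ) (hc₁ : 0 < c₁) (hc₂ : 0 < c₂)
    (hcoer : ∀ x ∈ C 0, c₁ * ‖x‖ ^ 2 - c₂ ≤ ⟪A₁ x, x⟫) :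
    ∀ u₀ ∈ C 0, ∃ M > (0:ℝ), ∀ u v : ℝ → H, SweepSol T A₀ A₁ f C u₀ u v →
      (∀ t ∈ Icc (0:ℝ) T, ‖u t‖ ≤ M) ∧ (∫ τ in Icc (0:ℝ) T, ‖v τ‖) ≤ M := by
  intro u₀ hu₀
  have h0T : (0:ℝ) ∈ Icc (0:ℝ) T := ⟨le_refl 0, hT.le⟩
  have hTT : T ∈ Icc (0:ℝ) T := right_mem_Icc.2 hT.le
  obtain ⟨Cg, hCg⟩ := isCompact_Icc.exists_bound_of_continuousOn hg
  obtain ⟨F, hF⟩ := isCompact_Icc.exists_bound_of_continuousOn hf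
  have hCg0 : 0 ≤ Cg := le_trans (norm_nonneg _) (hCg 0 h0T)
  have hF0 : 0 ≤ F := le_trans (norm_nonneg _) (hF 0 h0T)
  obtain ⟨d, hd_def⟩ : ∃ d : ℝ, d = 2 * Cg + 1 := ⟨_, rfl⟩
  have hd : 0 < d := by rw [hd_def]; positivity
  obtain ⟨N₀, hN₀_def⟩ : ∃ N₀ : ℝ, N₀ = ‖A₀‖ := ⟨_, rfl⟩
  obtain ⟨N₁, hN₁_def⟩ : ∃ N₁ : ℝ, N₁ = ‖A₁‖ := ⟨_, rfl⟩
  have hN₀ : 0 ≤ N₀ := hN₀_def ▸ norm_nonneg _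
  have hN₁ : 0 ≤ N₁ := hN₁_def ▸ norm_nonneg _
  have hu₀n : 0 ≤ ‖u₀‖ := norm_nonneg _
  obtain ⟨R, hR_def⟩ : ∃ R : ℝ, R = ‖u₀‖ + d := ⟨_, rfl⟩
  have hR : 0 < R := by rw [hR_def]; positivity
  obtain ⟨K₁, hK₁_def⟩ : ∃ K₁ : ℝ, K₁ = 2 * d * (c₁ + N₁) := ⟨_, rfl⟩
  obtain ⟨K₂, hK₂_def⟩ : ∃ K₂ : ℝ, K₂ = c₂ + (3 * c₁ + 2 * N₁) * d ^ 2 := ⟨_, rfl⟩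
  have hK₁ : 0 ≤ K₁ := by rw [hK₁_def]; positivity
  have hK₂ : 0 < K₂ := by rw [hK₂_def]; positivity
  obtain ⟨α, hα_def⟩ : ∃ α : ℝ,
      α = 1 + (K₂ + K₁ + N₁ * R + (N₀ * ‖u₀‖ + F) * (R + 1)) / c₁ := ⟨_, rfl⟩
  obtain ⟨β, hβ_def⟩ : ∃ β : ℝ, β = N₀ * (R + 1) / c₁ := ⟨_, rfl⟩
  have hβ : 0 ≤ β := by rw [hβ_def]; positivity
  have hα : 1 ≤ α := by
    have h1 : 0 ≤ (K₂ + K₁ + N₁ * R + (N₀ * ‖u₀‖ + F) * (R + 1)) / c₁ := by positivity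
    rw [hα_def]; linarith
  obtain ⟨GB, hGB_def⟩ : ∃ GB : ℝ, GB = max (gronwallBound 0 β (α * T) T) 0 := ⟨_, rfl⟩
  have hGB : 0 ≤ GB := hGB_def ▸ le_max_right _ _
  refine ⟨‖u₀‖ + α * T + β * GB + 1, ?_, ?_⟩
  · have h1 : 0 ≤ β * GB := mul_nonneg hβ hGB
    have h2 : 0 ≤ α * T := mul_nonneg (by linarith) hT.le
    linarith
  -- Hausdorff estimate: bound on |g s - g t|
  have hgd : ∀ s ∈ Icc (0:ℝ) T, ∀ t ∈ Icc (0:ℝ) T, |g s - g t| < d := by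
    intro s hs t ht
    have h1 := abs_le.1 (by simpa [Real.norm_eq_abs] using hCg s hs : |g s| ≤ Cg)
    have h2 := abs_le.1 (by simpa [Real.norm_eq_abs] using hCg t ht : |g t| ≤ Cg)
    rw [abs_sub_lt_iff, hd_def]
    constructor <;> linarith [h1.1, h1.2, h2.1, h2.2]
  -- selection of a point of C t close to u₀
  have hzsel : ∀ t ∈ Icc (0:ℝ) T, ∃ z ∈ C t, ‖z‖ ≤ R := by
    intro t ht
    have h1 : Metric.infDist u₀ (C t) < d :=
      lt_of_le_of_lt (hHaus 0 h0T t ht u₀ hu₀) (hgd 0 h0T t ht)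
    obtain ⟨z, hz, hdz⟩ := (Metric.infDist_lt_iff (hC t ht).1).1 h1
    refine ⟨z, hz, ?_⟩
    have h2 : ‖z‖ - ‖u₀‖ ≤ ‖z - u₀‖ := norm_sub_norm_le _ _
    have h3 : ‖z - u₀‖ < d := by rw [← dist_eq_norm, dist_comm]; exact hdz
    rw [hR_def]; linarith
  -- coercivity transfer to C t
  have hcoer' : ∀ t ∈ Icc (0:ℝ) T, ∀ x ∈ C t, c₁ * ‖x‖ ^ 2 - K₁ * ‖x‖ - K₂ ≤ ⟪A₁ x, x⟫ := by
    intro t ht x hx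
    have h1 : Metric.infDist x (C 0) < d :=
      lt_of_le_of_lt (hHaus t ht 0 h0T x hx) (hgd t ht 0 h0T)
    obtain ⟨y, hy, hdy⟩ := (Metric.infDist_lt_iff (hC 0 h0T).1).1 h1
    have hxy : ‖x - y‖ ≤ d := le_of_lt (by rwa [← dist_eq_norm])
    have hA := hcoer y hy
    have hexp : ⟪A₁ x, x⟫ =
        ⟪A₁ y, y⟫ + ⟪A₁ y, x - y⟫ + ⟪A₁ (x - y), y⟫ + ⟪A₁ (x - y), x - y⟫ := by
      have hxeq : x = y + (x - y) := by abel
      nth_rewrite 1 [hxeq]; nth_rewrite 2 [hxeq]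
      rw [map_add, inner_add_left, inner_add_right, inner_add_right]; ring
    have hb1 : |⟪A₁ y, x - y⟫| ≤ N₁ * ‖y‖ * d := by
      calc |⟪A₁ y, x - y⟫| ≤ ‖A₁ y‖ * ‖x - y‖ := abs_real_inner_le_norm _ _
        _ ≤ N₁ * ‖y‖ * d := by
            have h2 := A₁.le_opNorm y
            rw [← hN₁_def] at h2
            have h3 : 0 ≤ N₁ * ‖y‖ := by positivity
            nlinarith [norm_nonneg (x - y), norm_nonneg (A₁ y)]
    have hb2 : |⟪A₁ (x - y), y⟫| ≤ N₁ * ‖y‖ * d := by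
      calc |⟪A₁ (x - y), y⟫| ≤ ‖A₁ (x - y)‖ * ‖y‖ := abs_real_inner_le_norm _ _
        _ ≤ N₁ * ‖y‖ * d := by
            have h2 := A₁.le_opNorm (x - y)
            rw [← hN₁_def] at h2
            nlinarith [norm_nonneg y, norm_nonneg (A₁ (x - y)),
              mul_nonneg hN₁ (norm_nonneg y)]
    have hb3 : 0 ≤ ⟪A₁ (x - y), x - y⟫ := hA₁pos _
    have hxy2 : ‖x‖ ≤ ‖y‖ + d := by
      have := norm_sub_norm_le x y; linarith
    have hyx2 : ‖y‖ ≤ ‖x‖ + d := by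
      have h2 := norm_sub_norm_le y x
      have h3 : ‖y - x‖ = ‖x - y‖ := norm_sub_rev _ _
      linarith
    have habs1 := (abs_le.1 hb1).1
    have habs2 := (abs_le.1 hb2).1
    have P1 : 0 ≤ c₁ * ((‖y‖ + d - ‖x‖) * (‖x‖ + ‖y‖ + d)) := by
      have : 0 ≤ (‖y‖ + d - ‖x‖) * (‖x‖ + ‖y‖ + d) := by
        apply mul_nonneg (by linarith) (by positivity)
      positivity
    have P2 : 0 ≤ (N₁ * d) * (‖x‖ + d - ‖y‖) :=
      mul_nonneg (mul_nonneg hN₁ hd.le) (by linarith)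
    have P3 : 0 ≤ (c₁ * d) * (‖x‖ + d - ‖y‖) :=
      mul_nonneg (mul_nonneg hc₁.le hd.le) (by linarith)
    rw [hexp, hK₁_def, hK₂_def]
    linarith [P1, P2, P3]
  -- now fix a solution
  rintro u v ⟨hvint, hu, hae⟩
  have hnormint : IntegrableOn (fun τ => ‖v τ‖) (Icc 0 T) := hvint.norm
  obtain ⟨V, hV_def⟩ : ∃ V : ℝ → ℝ, V = fun x => ∫ τ in (0:ℝ)..x, ‖v τ‖ := ⟨_, rfl⟩
  have hVii : ∀ s t : ℝ, s ∈ Icc (0:ℝ) T → t ∈ Icc (0:ℝ) T →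
      IntervalIntegrable (fun τ => ‖v τ‖) volume s t := by
    intro s t hs ht
    exact (hnormint.mono_set (uIcc_subset_Icc hs ht)).intervalIntegrable
  have hVcont : ContinuousOn V (Icc 0 T) := by
    have h1 : IntegrableOn (fun τ => ‖v τ‖) (uIcc 0 T) := by rwa [uIcc_of_le hT.le]
    rw [hV_def]
    simpa [uIcc_of_le hT.le] using intervalIntegral.continuousOn_primitive_interval h1
  have hVnonneg : ∀ t ∈ Icc (0:ℝ) T, 0 ≤ V t := by
    intro t ht
    rw [hV_def]
    exact intervalIntegral.integral_nonneg ht.1 (fun τ _ => norm_nonneg _)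
  have hVmono : ∀ s t : ℝ, s ∈ Icc (0:ℝ) T → t ∈ Icc (0:ℝ) T → s ≤ t → V s ≤ V t := by
    intro s t hs ht hst
    have h1 : V t = V s + ∫ τ in s..t, ‖v τ‖ := by
      rw [hV_def]
      simp only
      rw [intervalIntegral.integral_add_adjacent_intervals (hVii 0 s h0T hs) (hVii s t hs ht)]
    have h2 : 0 ≤ ∫ τ in s..t, ‖v τ‖ :=
      intervalIntegral.integral_nonneg hst (fun τ _ => norm_nonneg _)
    rw [h1]; linarith
  have hu_bound : ∀ t ∈ Icc (0:ℝ) T, ‖u t‖ ≤ ‖u₀‖ + V t := by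
    intro t ht
    rw [hu t ht, hV_def]
    refine le_trans (norm_add_le _ _) ?_
    have h1 := intervalIntegral.norm_integral_le_integral_norm (f := v) (a := 0) (b := t)
      (μ := volume) ht.1
    simp only
    linarith
  -- the key pointwise bound
  have hkey : ∀ᵐ t ∂(volume.restrict (Icc (0:ℝ) T)), ‖v t‖ ≤ α + β * V t := by
    filter_upwards [hae, ae_restrict_mem measurableSet_Icc] with t hvt ht
    obtain ⟨hvC, hVI⟩ := hvt
    obtain ⟨z, hzC, hzR⟩ := hzsel t ht
    have hx : (0:ℝ) ≤ ‖v t‖ := norm_nonneg _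
    have hVt : 0 ≤ V t := hVnonneg t ht
    obtain ⟨U, hU_def⟩ : ∃ U : ℝ, U = ‖u₀‖ + V t := ⟨_, rfl⟩
    have hU : 0 ≤ U := by rw [hU_def]; positivity
    have huU : ‖u t‖ ≤ U := hU_def ▸ hu_bound t ht
    have h1 : ⟪A₁ (v t), v t⟫ ≤ ⟪A₁ (v t), z⟫ + ⟪A₀ (u t) - f t, z - v t⟫ := by
      have h2 := hVI z hzC
      have h3 : ⟪A₁ (v t) + A₀ (u t) - f t, z - v t⟫
          = ⟪A₁ (v t), z⟫ - ⟪A₁ (v t), v t⟫ + ⟪A₀ (u t) - f t, z - v t⟫ := by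
        rw [add_sub_assoc, inner_add_left, inner_sub_right]
      rw [h3] at h2
      linarith
    have hb1 : ⟪A₁ (v t), z⟫ ≤ N₁ * ‖v t‖ * R := by
      calc ⟪A₁ (v t), z⟫ ≤ |⟪A₁ (v t), z⟫| := le_abs_self _
        _ ≤ ‖A₁ (v t)‖ * ‖z‖ := abs_real_inner_le_norm _ _
        _ ≤ N₁ * ‖v t‖ * R := by
            have h4 := A₁.le_opNorm (v t)
            rw [← hN₁_def] at h4
            nlinarith [norm_nonneg (A₁ (v t)), norm_nonneg z, mul_nonneg hN₁ hx]
    have hb2 : ⟪A₀ (u t) - f t, z - v t⟫ ≤ (N₀ * U + F) * (R + ‖v t‖) := by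
      calc ⟪A₀ (u t) - f t, z - v t⟫ ≤ |⟪A₀ (u t) - f t, z - v t⟫| := le_abs_self _
        _ ≤ ‖A₀ (u t) - f t‖ * ‖z - v t‖ := abs_real_inner_le_norm _ _
        _ ≤ (N₀ * U + F) * (R + ‖v t‖) := by
            have h5 : ‖A₀ (u t) - f t‖ ≤ N₀ * U + F := by
              refine le_trans (norm_sub_le _ _) ?_
              have h6 := A₀.le_opNorm (u t)
              rw [← hN₀_def] at h6
              have h7 := hF t ht
              nlinarith [norm_nonneg (u t)]
            have h8 : ‖z - v t‖ ≤ R + ‖v t‖ := le_trans (norm_sub_le _ _) (by linarith)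
            have h9 : 0 ≤ ‖A₀ (u t) - f t‖ := norm_nonneg _
            have h10 : 0 ≤ ‖z - v t‖ := norm_nonneg _
            nlinarith
    have h2 := hcoer' t ht (v t) hvC
    have hquad : c₁ * ‖v t‖ ^ 2 ≤
        (K₂ + (N₀ * U + F) * R) + (K₁ + N₁ * R + N₀ * U + F) * ‖v t‖ := by nlinarith
    have ha' : 0 ≤ K₂ + (N₀ * U + F) * R := by positivity
    have hb' : 0 ≤ K₁ + N₁ * R + N₀ * U + F := by positivity
    have h3 := quad_aux hc₁ hx ha' hb' hquad
    have h4 : 1 + ((K₂ + (N₀ * U + F) * R) + (K₁ + N₁ * R + N₀ * U + F)) / c₁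
        = α + β * V t := by
      rw [hα_def, hβ_def, hU_def]
      field_simp
      ring
    rw [h4] at h3
    exact h3
  -- Gronwall
  obtain ⟨G, hG_def⟩ : ∃ G : ℝ → ℝ, G = fun x => ∫ s in (0:ℝ)..x, V s := ⟨_, rfl⟩
  have hVIcc : IntegrableOn V (Icc 0 T) := hVcont.integrableOn_Icc
  have hVii' : ∀ x ∈ Icc (0:ℝ) T, IntervalIntegrable V volume 0 x := by
    intro x hx
    exact (hVIcc.mono_set (uIcc_subset_Icc h0T hx)).intervalIntegrable
  have hGcont : ContinuousOn G (Icc 0 T) := by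
    have h1 : IntegrableOn V (uIcc 0 T) := by rwa [uIcc_of_le hT.le]
    rw [hG_def]
    simpa [uIcc_of_le hT.le] using intervalIntegral.continuousOn_primitive_interval h1
  have hGnonneg : ∀ x ∈ Icc (0:ℝ) T, 0 ≤ G x := by
    intro x hx
    rw [hG_def]
    exact intervalIntegral.integral_nonneg hx.1
      (fun s hs => hVnonneg s ⟨hs.1, le_trans hs.2 hx.2⟩)
  have hVbound : ∀ x ∈ Icc (0:ℝ) T, V x ≤ α * x + β * G x := by
    intro x hx
    have hsub : Icc (0:ℝ) x ⊆ Icc 0 T := Icc_subset_Icc le_rfl hx.2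
    have hii : IntervalIntegrable (fun τ => α + β * V τ) volume 0 x :=
      IntervalIntegrable.add intervalIntegrable_const ((hVii' x hx).const_mul β)
    have hVx : V x = ∫ τ in (0:ℝ)..x, ‖v τ‖ := by rw [hV_def]
    have hmono : V x ≤ ∫ τ in (0:ℝ)..x, (α + β * V τ) := by
      rw [hVx]
      exact intervalIntegral.integral_mono_ae_restrict hx.1 (hVii 0 x h0T hx) hii
        (ae_restrict_of_ae_restrict_of_subset hsub hkey)
    have heval : (∫ τ in (0:ℝ)..x, (α + β * V τ)) = α * x + β * G x := by
      rw [intervalIntegral.integral_add intervalIntegrable_const ((hVii' x hx).const_mul β),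
        intervalIntegral.integral_const, intervalIntegral.integral_const_mul, hG_def]
      simp
      ring
    rw [heval] at hmono
    exact hmono
  have hG' : ∀ x ∈ Ico (0:ℝ) T, HasDerivWithinAt G (V x) (Ici x) x := by
    intro x hx
    have hxIcc : x ∈ Icc (0:ℝ) T := ⟨hx.1, hx.2.le⟩
    have hmem : Icc (0:ℝ) T ∈ nhdsWithin x (Ioi x) := by
      have h1 : Iio T ∈ nhds x := Iio_mem_nhds hx.2
      have h2 : Iio T ∩ Ioi x ∈ nhdsWithin x (Ioi x) :=
        Filter.inter_mem (mem_nhdsWithin_of_mem_nhds h1) self_mem_nhdsWithin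
      refine Filter.mem_of_superset h2 ?_
      rintro y ⟨hy1, hy2⟩
      exact ⟨le_of_lt (lt_of_le_of_lt hx.1 hy2), hy1.le⟩
    have hmeas : StronglyMeasurableAtFilter V (nhdsWithin x (Ioi x)) :=
      ⟨Icc 0 T, hmem, hVcont.aestronglyMeasurable measurableSet_Icc⟩
    have hcont : ContinuousWithinAt V (Ioi x) x := (hVcont x hxIcc).mono_of_mem_nhdsWithin hmem
    rw [hG_def]
    exact intervalIntegral.integral_hasDerivWithinAt_right (hVii' x hxIcc) hmeas hcont
  have hbound : ∀ x ∈ Ico (0:ℝ) T, ‖V x‖ ≤ β * ‖G x‖ + α * T := by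
    intro x hx
    have hxIcc : x ∈ Icc (0:ℝ) T := ⟨hx.1, hx.2.le⟩
    rw [Real.norm_of_nonneg (hVnonneg x hxIcc), Real.norm_of_nonneg (hGnonneg x hxIcc)]
    have h1 := hVbound x hxIcc
    have h2 : α * x ≤ α * T := mul_le_mul_of_nonneg_left hx.2.le (by linarith)
    linarith
  have hGT : G T ≤ GB := by
    have h0 : ‖G 0‖ ≤ 0 := by rw [hG_def]; simp
    have h5 := norm_le_gronwallBound_of_norm_deriv_right_le hGcont hG' h0 hbound T hTT
    rw [Real.norm_of_nonneg (hGnonneg T hTT), sub_zero] at h5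
    rw [hGB_def]
    exact le_trans h5 (le_max_left _ _)
  have hVT : V T ≤ α * T + β * GB := by
    have h1 := hVbound T hTT
    have h2 : β * G T ≤ β * GB := mul_le_mul_of_nonneg_left hGT hβ
    linarith
  constructor
  · intro t ht
    have h1 := hu_bound t ht
    have h2 := hVmono t T ht hTT ht.2
    have h3 : 0 ≤ β * GB := mul_nonneg hβ hGB
    linarith
  · have h1 : (∫ τ in Icc (0:ℝ) T, ‖v τ‖) = V T := by
      rw [hV_def]
      simp only
      rw [intervalIntegral.integral_of_le hT.le, integral_Icc_eq_integral_Ioc]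
    rw [h1]
    linarith
end

section
/- Suppose C(t) is nonempty and convex for every t ∈ [0,T], C is Lipschitz-like around every point of its graph (i.e., for every t̄ ∈ [0,T] and x̄ ∈ C(t̄) there exist a neighborhood V of t̄ in [0,T], a neighborhood W of x̄ in H, and κ > 0 such that C(t') ∩ W ⊆ C(t'') + κ|t' − t''|·B̄(0,1) for all t', t'' ∈ V, where B̄(0,1) is the closed unit ball), and there exist positive constants c₁, c₂ such that ⟨A₁ x, x⟩ ≥ c₁‖x‖² − c₂ for every t ∈ [0,T] and every x ∈ C(t). Then for every u₀ ∈ C(0) there exists M > 0 such that every solution u of the sweeping process (P) with initial value u₀, with Bochner-integrable derivative v, satisfies ‖u(t)‖ ≤ M for all t ∈ [0,T] and ∫₀ᵀ ‖v(τ)‖ dτ ≤ M; i.e., the solution set Sol(P,u₀) is bounded in C⁰([0,T],H) and in W^{1,1}([0,T],H). -/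
/-!
Testing the variational inequality at time `t` against a point `z ∈ C(t)` of norm at most `R`
(such a bounded selection exists by compactness of `[0,T]` and the Lipschitz-like property) and
using the coercivity of `A₁` on `C(t)` gives a quadratic inequality for `‖v(t)‖` whose
coefficients are affine in `‖u(t)‖ ≤ ‖u₀‖ + ∫₀ᵗ ‖v‖`. Hence `‖v(t)‖ ≤ α + β ∫₀ᵗ ‖v‖`
almost everywhere, and an integral Grönwall inequality bounds `∫₀ᵀ ‖v‖`, and with it `u`.
-/

open MeasureTheory Set
open scoped RealInnerProductSpace

open Filter Topology
open scoped Nat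

theorem integral_mul_pow_div_factorial (β t : ℝ) (n : ℕ) :
    ∫ τ in (0:ℝ)..t, β * (β * τ) ^ n / n ! = (β * t) ^ (n + 1) / (n + 1)! := by
  simp only [mul_pow, mul_div_assoc, intervalIntegral.integral_const_mul,
    div_eq_mul_inv _ (n ! : ℝ), intervalIntegral.integral_mul_const, integral_pow]
  push_cast [Nat.factorial_succ]
  field_simp
  ring

@[fun_prop]
theorem continuous_gronwallBound (δ K ε : ℝ) : Continuous (gronwallBound δ K ε) :=
  continuous_iff_continuousAt.2 fun x => (hasDerivAt_gronwallBound δ K ε x).continuousAt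

theorem gronwallBound_zero_nonneg {α β t : ℝ} (hα : 0 ≤ α) (hβ : 0 ≤ β) (ht : 0 ≤ t) :
    0 ≤ gronwallBound 0 β α t := by
  simpa only [gronwallBound_x0] using gronwallBound_mono le_rfl hα hβ ht

theorem integral_gronwallBound (α β t : ℝ) :
    ∫ τ in (0:ℝ)..t, β * gronwallBound 0 β α τ + α = gronwallBound 0 β α t := by
  have hderiv := hasDerivAt_gronwallBound 0 β α
  rw [intervalIntegral.integral_eq_sub_of_hasDerivAt (fun x _ => hderiv x)
    ((by fun_prop :
      Continuous fun τ => β * gronwallBound 0 β α τ + α).intervalIntegrable _ _),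
    gronwallBound_x0, sub_zero]

section Gronwall

variable {g : ℝ → ℝ} {α β T : ℝ}

-- Picard iteration, started from the crude bound `∫₀ᵗ g ≤ ∫ |g|`.
theorem integral_le_gronwallBound_add_pow_div_factorial (hα : 0 ≤ α) (hβ : 0 ≤ β)
    (hg : IntegrableOn g (Icc 0 T))
    (hbound : ∀ᵐ t ∂volume.restrict (Icc 0 T), g t ≤ α + β * ∫ τ in (0:ℝ)..t, g τ)
    (n : ℕ) : ∀ t ∈ Icc 0 T, ∫ τ in (0:ℝ)..t, g τ ≤
      gronwallBound 0 β α t + (∫ τ in Icc 0 T, |g τ|) * ((β * t) ^ n / n !) := by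
  induction n with
  | zero =>
    intro t ht
    have hsub : Icc 0 t ⊆ Icc 0 T := Icc_subset_Icc_right ht.2
    have hG := gronwallBound_zero_nonneg hα hβ ht.1
    have hK : ∫ τ in (0:ℝ)..t, g τ ≤ ∫ τ in Icc 0 T, |g τ| := calc
      _ ≤ ∫ τ in (0:ℝ)..t, |g τ| :=
        (le_abs_self _).trans (intervalIntegral.abs_integral_le_integral_abs ht.1)
      _ ≤ _ := by
        rw [intervalIntegral.integral_of_le ht.1, ← integral_Icc_eq_integral_Ioc]
        exact setIntegral_mono_set hg.abs (.of_forall fun _ => abs_nonneg _) hsub.eventuallyLE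
    simp only [pow_zero, Nat.factorial_zero, Nat.cast_one, div_one, mul_one]
    linarith
  | succ n ih =>
    intro t ht
    have hsub : Icc 0 t ⊆ Icc 0 T := Icc_subset_Icc_right ht.2
    set K := ∫ τ in Icc 0 T, |g τ|
    calc ∫ τ in (0:ℝ)..t, g τ
        ≤ ∫ τ in (0:ℝ)..t, (β * gronwallBound 0 β α τ + α) + K * (β * (β * τ) ^ n / n !) := by
          refine intervalIntegral.integral_mono_ae_restrict ht.1
            ((intervalIntegrable_iff_integrableOn_Icc_of_le ht.1).2 (hg.mono_set hsub))
            ((by fun_prop : Continuous _).intervalIntegrable _ _) ?_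
          filter_upwards [ae_mono (Measure.restrict_mono hsub le_rfl) hbound,
            ae_restrict_mem measurableSet_Icc] with τ hτ hτt
          have := mul_le_mul_of_nonneg_left (ih τ (hsub hτt)) hβ
          linear_combination hτ + this
      _ = gronwallBound 0 β α t + K * ((β * t) ^ (n + 1) / (n + 1)!) := by
          rw [intervalIntegral.integral_add, intervalIntegral.integral_const_mul,
            integral_gronwallBound, integral_mul_pow_div_factorial]
          all_goals exact (by fun_prop : Continuous _).intervalIntegrable _ _

theorem integral_le_gronwallBound_of_ae_le_add_mul_integral (hα : 0 ≤ α) (hβ : 0 ≤ β)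
    (hg : IntegrableOn g (Icc 0 T))
    (hbound : ∀ᵐ t ∂volume.restrict (Icc 0 T), g t ≤ α + β * ∫ τ in (0:ℝ)..t, g τ)
    {t : ℝ} (ht : t ∈ Icc 0 T) : ∫ τ in (0:ℝ)..t, g τ ≤ gronwallBound 0 β α t := by
  have hlim := ((FloorSemiring.tendsto_pow_div_factorial_atTop (β * t)).const_mul
    (∫ τ in Icc 0 T, |g τ|)).const_add (gronwallBound 0 β α t)
  rw [mul_zero, add_zero] at hlim
  exact ge_of_tendsto hlim (.of_forall fun n =>
    integral_le_gronwallBound_add_pow_div_factorial hα hβ hg hbound n t ht)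

end Gronwall

theorem le_one_add_div_of_mul_sq_le {a b c x : ℝ} (hc : 0 < c) (ha : 0 ≤ a) (hb : 0 ≤ b)
    (h : c * x ^ 2 ≤ a + b * x) : x ≤ 1 + (a + b) / c := by
  rcases le_or_gt x 1 with hx | hx
  · linarith [div_nonneg (add_nonneg ha hb) hc.le]
  · have : c * x ≤ a + b := by nlinarith
    have : x ≤ (a + b) / c := by rw [le_div_iff₀ hc]; linarith
    linarith

section VariationalInequality

variable {H : Type*} [NormedAddCommGroup H] [InnerProductSpace ℝ H]

theorem mul_sq_norm_le_of_inner_nonneg (A₀ A₁ : H →L[ℝ] H) {c₁ c₂ : ℝ} {u v w z : H}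
    (hvi : 0 ≤ ⟪A₁ v + A₀ u - w, z - v⟫) (hcoer : c₁ * ‖v‖ ^ 2 - c₂ ≤ ⟪A₁ v, v⟫) :
    c₁ * ‖v‖ ^ 2 ≤ c₂ + ‖A₁‖ * ‖z‖ * ‖v‖ + (‖A₀‖ * ‖u‖ + ‖w‖) * (‖z‖ + ‖v‖) := by
  have hsplit : ⟪A₁ v + A₀ u - w, z - v⟫ = ⟪A₁ v, z⟫ - ⟪A₁ v, v⟫ + ⟪A₀ u - w, z - v⟫ := by
    rw [add_sub_assoc, inner_add_left, inner_sub_right]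
  have h₁ : ⟪A₁ v, z⟫ ≤ ‖A₁‖ * ‖z‖ * ‖v‖ := calc
    _ ≤ ‖A₁ v‖ * ‖z‖ := real_inner_le_norm _ _
    _ ≤ ‖A₁‖ * ‖v‖ * ‖z‖ := by gcongr; exact A₁.le_opNorm v
    _ = _ := by ring
  have h₀ : ⟪A₀ u - w, z - v⟫ ≤ (‖A₀‖ * ‖u‖ + ‖w‖) * (‖z‖ + ‖v‖) := calc
    _ ≤ ‖A₀ u - w‖ * ‖z - v‖ := real_inner_le_norm _ _
    _ ≤ (‖A₀‖ * ‖u‖ + ‖w‖) * (‖z‖ + ‖v‖) := by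
      gcongr
      · exact (norm_sub_le _ _).trans (by gcongr; exact A₀.le_opNorm u)
      · exact norm_sub_le _ _
  linarith

theorem norm_le_of_inner_nonneg (A₀ A₁ : H →L[ℝ] H) {c₁ c₂ : ℝ} (hc₁ : 0 < c₁) (hc₂ : 0 ≤ c₂)
    {u v w z : H} (hvi : 0 ≤ ⟪A₁ v + A₀ u - w, z - v⟫) (hcoer : c₁ * ‖v‖ ^ 2 - c₂ ≤ ⟪A₁ v, v⟫) :
    ‖v‖ ≤ 1 + (c₂ + (‖A₀‖ * ‖u‖ + ‖w‖) * (‖z‖ + 1) + ‖A₁‖ * ‖z‖) / c₁ := by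
  have h := mul_sq_norm_le_of_inner_nonneg A₀ A₁ hvi hcoer
  convert le_one_add_div_of_mul_sq_le hc₁ (x := ‖v‖)
    (a := c₂ + (‖A₀‖ * ‖u‖ + ‖w‖) * ‖z‖)
    (b := ‖A₁‖ * ‖z‖ + ‖A₀‖ * ‖u‖ + ‖w‖) (by positivity) (by positivity) (by linarith) using 3
  ring

end VariationalInequality

def IsLipschitzLikeOn {E : Type*} [SeminormedAddCommGroup E] (C : ℝ → Set E) (s : Set ℝ) :
    Prop :=
  ∀ tb ∈ s, ∀ xb ∈ C tb, ∃ V ∈ 𝓝[s] tb, ∃ W ∈ 𝓝 xb, ∃ κ > (0:ℝ),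
    ∀ t' ∈ V ∩ s, ∀ t'' ∈ V ∩ s, ∀ x ∈ C t' ∩ W, ∃ z ∈ C t'', ‖x - z‖ ≤ κ * |t' - t''|

theorem IsLipschitzLikeOn.exists_bounded_selection {E : Type*} [SeminormedAddCommGroup E]
    {C : ℝ → Set E} {s : Set ℝ} (hC : IsLipschitzLikeOn C s) (hs : IsCompact s)
    (hne : ∀ t ∈ s, (C t).Nonempty) : ∃ R, ∀ t ∈ s, ∃ z ∈ C t, ‖z‖ ≤ R := by
  refine hs.induction_on ⟨0, by simp⟩ (fun s₁ s₂ h ⟨R, hR⟩ => ⟨R, fun t ht => hR t (h ht)⟩)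
    (fun s₁ s₂ ⟨R₁, h₁⟩ ⟨R₂, h₂⟩ => ⟨max R₁ R₂, ?_⟩) fun tb htb => ?_
  · rintro t (ht | ht)
    · obtain ⟨z, hz, hzR⟩ := h₁ t ht
      exact ⟨z, hz, hzR.trans (le_max_left _ _)⟩
    · obtain ⟨z, hz, hzR⟩ := h₂ t ht
      exact ⟨z, hz, hzR.trans (le_max_right _ _)⟩
  · obtain ⟨xb, hxb⟩ := hne tb htb
    obtain ⟨V, hV, W, hW, κ, hκ₀, hκ⟩ := hC tb htb xb hxb
    refine ⟨V ∩ s ∩ Metric.ball tb 1, inter_mem (inter_mem hV self_mem_nhdsWithin)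
      (mem_nhdsWithin_of_mem_nhds (Metric.ball_mem_nhds _ one_pos)), ‖xb‖ + κ, ?_⟩
    rintro t ⟨ht, htb1⟩
    obtain ⟨z, hz, hxz⟩ := hκ tb ⟨mem_of_mem_nhdsWithin htb hV, htb⟩ t ht xb
      ⟨hxb, mem_of_mem_nhds hW⟩
    have hdist : |tb - t| ≤ 1 := by
      rw [abs_sub_comm, ← Real.dist_eq]; exact (Metric.mem_ball.1 htb1).le
    refine ⟨z, hz, ?_⟩
    calc ‖z‖ ≤ ‖xb‖ + ‖xb - z‖ := norm_le_norm_add_norm_sub xb z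
      _ ≤ ‖xb‖ + κ := by gcongr; exact hxz.trans (mul_le_of_le_one_right hκ₀.le hdist)

namespace SweepSol

variable {H : Type*} [NormedAddCommGroup H] [InnerProductSpace ℝ H] {T : ℝ}
  {A₀ A₁ : H →L[ℝ] H} {f : ℝ → H} {C : ℝ → Set H} {u₀ : H} {u v : ℝ → H}

theorem norm_le_add_integral_norm (hsol : SweepSol T A₀ A₁ f C u₀ u v) {t : ℝ}
    (ht : t ∈ Icc 0 T) : ‖u t‖ ≤ ‖u₀‖ + ∫ τ in (0:ℝ)..t, ‖v τ‖ := by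
  rw [hsol.2.1 t ht]
  exact (norm_add_le _ _).trans
    (by gcongr; exact intervalIntegral.norm_integral_le_integral_norm ht.1)

theorem ae_norm_le_add_mul_integral (hsol : SweepSol T A₀ A₁ f C u₀ u v) {c₁ c₂ R F : ℝ}
    (hc₁ : 0 < c₁) (hc₂ : 0 ≤ c₂)
    (hcoer : ∀ t ∈ Icc (0:ℝ) T, ∀ x ∈ C t, c₁ * ‖x‖ ^ 2 - c₂ ≤ ⟪A₁ x, x⟫)
    (hR : ∀ t ∈ Icc (0:ℝ) T, ∃ z ∈ C t, ‖z‖ ≤ R) (hF : ∀ t ∈ Icc (0:ℝ) T, ‖f t‖ ≤ F) :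
    ∀ᵐ t ∂volume.restrict (Icc 0 T), ‖v t‖ ≤
      1 + (c₂ + (‖A₀‖ * ‖u₀‖ + F) * (R + 1) + ‖A₁‖ * R) / c₁
        + ‖A₀‖ * (R + 1) / c₁ * ∫ τ in (0:ℝ)..t, ‖v τ‖ := by
  filter_upwards [hsol.2.2, ae_restrict_mem measurableSet_Icc] with t ⟨hvC, hvi⟩ ht
  obtain ⟨z, hzC, hzR⟩ := hR t ht
  have hF0 : 0 ≤ F := (norm_nonneg _).trans (hF t ht)
  have hΦ : 0 ≤ ∫ τ in (0:ℝ)..t, ‖v τ‖ :=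
    intervalIntegral.integral_nonneg ht.1 fun _ _ => norm_nonneg _
  calc ‖v t‖ ≤ 1 + (c₂ + (‖A₀‖ * ‖u t‖ + ‖f t‖) * (‖z‖ + 1) + ‖A₁‖ * ‖z‖) / c₁ :=
        norm_le_of_inner_nonneg A₀ A₁ hc₁ hc₂ (hvi z hzC) (hcoer t ht _ hvC)
    _ ≤ 1 + (c₂ + (‖A₀‖ * (‖u₀‖ + ∫ τ in (0:ℝ)..t, ‖v τ‖) + F) * (R + 1) + ‖A₁‖ * R) / c₁ := by
        gcongr
        exacts [hsol.norm_le_add_integral_norm ht, hF t ht]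
    _ = _ := by ring

end SweepSol

theorem boundedness_sol_Lipschitz_like_general
    {H : Type*} [NormedAddCommGroup H] [InnerProductSpace ℝ H]
    (T : ℝ) (hT : 0 < T) (A₀ A₁ : H →L[ℝ] H)
    (f : ℝ → H) (hf : ContinuousOn f (Icc 0 T))
    (C : ℝ → Set H)
    (hC : ∀ t ∈ Icc (0:ℝ) T, (C t).Nonempty ∧ Convex ℝ (C t))
    (hLL : ∀ tb ∈ Icc (0:ℝ) T, ∀ xb ∈ C tb,
      ∃ V ∈ nhdsWithin tb (Icc (0:ℝ) T), ∃ W ∈ nhds xb, ∃ κ > (0:ℝ),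
        ∀ t' ∈ V ∩ Icc (0:ℝ) T, ∀ t'' ∈ V ∩ Icc (0:ℝ) T,
          ∀ x ∈ C t' ∩ W, ∃ z ∈ C t'', ‖x - z‖ ≤ κ * |t' - t''|)
    (c₁ c₂ : ℝ) (hc₁ : 0 < c₁) (hc₂ : 0 < c₂)
    (hcoer : ∀ t ∈ Icc (0:ℝ) T, ∀ x ∈ C t, c₁ * ‖x‖ ^ 2 - c₂ ≤ ⟪A₁ x, x⟫) :
    ∀ u₀ ∈ C 0, ∃ M > (0:ℝ), ∀ u v : ℝ → H, SweepSol T A₀ A₁ f C u₀ u v →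
      (∀ t ∈ Icc (0:ℝ) T, ‖u t‖ ≤ M) ∧ (∫ τ in Icc (0:ℝ) T, ‖v τ‖) ≤ M := by
  intro u₀ _
  have hT₀ : (0:ℝ) ∈ Icc 0 T := ⟨le_rfl, hT.le⟩
  obtain ⟨R, hR⟩ := IsLipschitzLikeOn.exists_bounded_selection hLL isCompact_Icc
    fun t ht => (hC t ht).1
  obtain ⟨F, hF⟩ := isCompact_Icc.exists_bound_of_continuousOn hf
  have hR0 : 0 ≤ R := by obtain ⟨z, -, hz⟩ := hR 0 hT₀; exact (norm_nonneg z).trans hz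
  have hF0 : 0 ≤ F := (norm_nonneg _).trans (hF 0 hT₀)
  set α := 1 + (c₂ + (‖A₀‖ * ‖u₀‖ + F) * (R + 1) + ‖A₁‖ * R) / c₁
  set β := ‖A₀‖ * (R + 1) / c₁
  have hα : 0 ≤ α := by positivity
  have hβ : 0 ≤ β := by positivity
  have hG := gronwallBound_zero_nonneg hα hβ hT.le
  refine ⟨‖u₀‖ + gronwallBound 0 β α T + 1, by positivity, fun u v hsol => ?_⟩
  have hint : ∫ τ in (0:ℝ)..T, ‖v τ‖ ≤ gronwallBound 0 β α T :=
    integral_le_gronwallBound_of_ae_le_add_mul_integral hα hβ hsol.1.norm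
      (hsol.ae_norm_le_add_mul_integral hc₁ hc₂.le hcoer hR hF) ⟨hT.le, le_rfl⟩
  rw [integral_Icc_eq_integral_Ioc, ← intervalIntegral.integral_of_le hT.le]
  refine ⟨fun t ht => ?_, by linarith [norm_nonneg u₀]⟩
  have hmono : ∫ τ in (0:ℝ)..t, ‖v τ‖ ≤ ∫ τ in (0:ℝ)..T, ‖v τ‖ :=
    intervalIntegral.integral_mono_interval le_rfl ht.1 ht.2 (.of_forall fun _ => norm_nonneg _)
      ((intervalIntegrable_iff_integrableOn_Icc_of_le hT.le).2 hsol.1.norm)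
  linarith [hsol.norm_le_add_integral_norm ht]

theorem boundedness_sol_Lipschitz_like
    {H : Type*} [NormedAddCommGroup H] [InnerProductSpace ℝ H] [CompleteSpace H]
    (T : ℝ) (hT : 0 < T) (A₀ A₁ : H →L[ℝ] H)
    (hA₀sym : ∀ x y : H, ⟪A₀ x, y⟫ = ⟪x, A₀ y⟫)
    (hA₁sym : ∀ x y : H, ⟪A₁ x, y⟫ = ⟪x, A₁ y⟫)
    (hA₀pos : ∀ x : H, 0 ≤ ⟪A₀ x, x⟫)
    (hA₁pos : ∀ x : H, 0 ≤ ⟪A₁ x, x⟫)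
    (f : ℝ → H) (hf : ContinuousOn f (Icc 0 T))
    (C : ℝ → Set H)
    (hC : ∀ t ∈ Icc (0:ℝ) T, (C t).Nonempty ∧ Convex ℝ (C t))
    (hLL : ∀ tb ∈ Icc (0:ℝ) T, ∀ xb ∈ C tb,
      ∃ V ∈ nhdsWithin tb (Icc (0:ℝ) T), ∃ W ∈ nhds xb, ∃ κ > (0:ℝ),
        ∀ t' ∈ V ∩ Icc (0:ℝ) T, ∀ t'' ∈ V ∩ Icc (0:ℝ) T,
          ∀ x ∈ C t' ∩ W, ∃ z ∈ C t'', ‖x - z‖ ≤ κ * |t' - t''|)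
    (c₁ c₂ : ℝ) (hc₁ : 0 < c₁) (hc₂ : 0 < c₂)
    (hcoer : ∀ t ∈ Icc (0:ℝ) T, ∀ x ∈ C t, c₁ * ‖x‖ ^ 2 - c₂ ≤ ⟪A₁ x, x⟫) :
    ∀ u₀ ∈ C 0, ∃ M > (0:ℝ), ∀ u v : ℝ → H, SweepSol T A₀ A₁ f C u₀ u v →
      (∀ t ∈ Icc (0:ℝ) T, ‖u t‖ ≤ M) ∧ (∫ τ in Icc (0:ℝ) T, ‖v τ‖) ≤ M :=
  boundedness_sol_Lipschitz_like_general T hT A₀ A₁ f hf C hC hLL c₁ c₂ hc₁ hc₂ hcoer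
end

section
/- Suppose C(t) is nonempty and convex for every t ∈ [0,T], C is inner semicontinuous at every point of its graph (i.e., for every t ∈ [0,T], x ∈ C(t) and every open set U ⊆ H containing x, there exists a neighborhood V of t in [0,T] such that C(t') ∩ U ≠ ∅ for all t' ∈ V), and there exist positive constants c₁, c₂ such that ⟨A₁ x, x⟩ ≥ c₁‖x‖² − c₂ for every t ∈ [0,T] and every x ∈ C(t). Then for every u₀ ∈ C(0) there exists M > 0 such that every solution u of the sweeping process (P) with initial value u₀, with Bochner-integrable derivative v, satisfies ‖u(t)‖ ≤ M for all t ∈ [0,T] and ∫₀ᵀ ‖v(τ)‖ dτ ≤ M; i.e., the solution set Sol(P,u₀) is bounded in C⁰([0,T],H) and in W^{1,1}([0,T],H). -/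
open MeasureTheory Set Filter Topology
open scoped RealInnerProductSpace

theorem IsCompact.exists_bound_of_innerSemicontinuous {X E : Type*} [TopologicalSpace X]
    [SeminormedAddCommGroup E] {K : Set X} (hK : IsCompact K) {C : X → Set E}
    (hne : ∀ t ∈ K, (C t).Nonempty)
    (hisc : ∀ t ∈ K, ∀ x ∈ C t, ∀ U : Set E, IsOpen U → x ∈ U →
      ∀ᶠ t' in 𝓝[K] t, (C t' ∩ U).Nonempty) :
    ∃ R, ∀ t ∈ K, ∃ z ∈ C t, ‖z‖ ≤ R := by
  refine hK.induction_on (p := fun s => ∃ R, ∀ t ∈ s, ∃ z ∈ C t, ‖z‖ ≤ R)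
    ⟨0, by simp⟩ (fun s s' hss' ⟨R, hR⟩ => ⟨R, fun t ht => hR t (hss' ht)⟩)
    (fun s s' ⟨R, hR⟩ ⟨R', hR'⟩ => ⟨max R R', ?_⟩) fun t ht => ?_
  · rintro t (ht | ht)
    · obtain ⟨z, hz, hzR⟩ := hR t ht
      exact ⟨z, hz, hzR.trans (le_max_left _ _)⟩
    · obtain ⟨z, hz, hzR⟩ := hR' t ht
      exact ⟨z, hz, hzR.trans (le_max_right _ _)⟩
  · obtain ⟨x, hx⟩ := hne t ht
    refine ⟨_, hisc t ht x hx _ Metric.isOpen_ball (Metric.mem_ball_self one_pos), ‖x‖ + 1, ?_⟩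
    rintro t' ⟨z, hz, hzx⟩
    refine ⟨z, hz, ?_⟩
    linarith [norm_le_norm_add_norm_sub' z x, mem_ball_iff_norm.mp hzx]

theorem mul_le_add_add_of_mul_sq_le {c K L s : ℝ} (hc : 0 ≤ c) (hK : 0 ≤ K) (hL : 0 ≤ L)
    (h : c * s ^ 2 ≤ K * s + L) : c * s ≤ c + K + L := by
  rcases le_or_gt s 1 with hs | hs <;> nlinarith

theorem mul_norm_le_of_coercive_of_inner_nonneg {H : Type*} [NormedAddCommGroup H]
    [InnerProductSpace ℝ H] (A : H →L[ℝ] H) {g v z : H} {c₁ c₂ R : ℝ}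
    (hc₁ : 0 ≤ c₁) (hc₂ : 0 ≤ c₂) (hz : ‖z‖ ≤ R)
    (hcoer : c₁ * ‖v‖ ^ 2 - c₂ ≤ ⟪A v, v⟫) (hvi : 0 ≤ ⟪A v + g, z - v⟫) :
    c₁ * ‖v‖ ≤ c₁ + c₂ + R * ‖A‖ + (1 + R) * ‖g‖ := by
  have hR : 0 ≤ R := (norm_nonneg z).trans hz
  have hAv : ⟪A v, v⟫ ≤ ⟪A v + g, z⟫ - ⟪g, v⟫ := by
    rw [inner_sub_right, inner_add_left (A v) g v] at hvi
    linarith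
  have hz' : ⟪A v + g, z⟫ ≤ (‖A‖ * ‖v‖ + ‖g‖) * R :=
    calc ⟪A v + g, z⟫ ≤ ‖A v + g‖ * ‖z‖ := real_inner_le_norm _ _
      _ ≤ (‖A‖ * ‖v‖ + ‖g‖) * R := by
        gcongr
        exact (norm_add_le _ _).trans (by gcongr; exact A.le_opNorm v)
  have hgv : -⟪g, v⟫ ≤ ‖g‖ * ‖v‖ := by
    linarith [neg_le_of_abs_le (abs_real_inner_le_norm g v)]
  have hquad : c₁ * ‖v‖ ^ 2 ≤ (R * ‖A‖ + ‖g‖) * ‖v‖ + (c₂ + R * ‖g‖) := by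
    linarith
  linarith [mul_le_add_add_of_mul_sq_le hc₁ (by positivity) (by positivity) hquad]

theorem le_two_pow_mul_of_sub_le_mul {w : ℝ → ℝ} {a b T : ℝ} {n : ℕ} (ha : 0 ≤ a) (hT : 0 ≤ T)
    (hn : 0 < n) (hbn : 2 * b * T ≤ n) (hw : ∀ t ∈ Icc 0 T, 0 ≤ w t)
    (hstep : ∀ s ∈ Icc 0 T, ∀ t ∈ Icc 0 T, s ≤ t → w t - w s ≤ (t - s) * (a + b * w t)) :
    w T ≤ 2 ^ n * (w 0 + 2 * a * T) := by
  have hn' : (1 : ℝ) ≤ n := by exact_mod_cast hn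
  set δ := T / n with hδ
  have hδ0 : 0 ≤ δ := by positivity
  have hnδ : n * δ = T := mul_div_cancel₀ T (by positivity)
  have hδT : δ ≤ T := div_le_self hT hn'
  have hbδ : b * δ ≤ 1 / 2 := by
    rw [hδ, mul_div_assoc', div_le_iff₀ (by positivity)]
    linarith
  have hgrid : ∀ k ≤ n, (k : ℝ) * δ ∈ Icc 0 T := fun k hk =>
    ⟨by positivity, hnδ ▸ mul_le_mul_of_nonneg_right (by exact_mod_cast hk) hδ0⟩
  -- each step of length `δ` at most doubles `w + 2aδ`, because `b δ ≤ 1/2`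
  have hgrowth : ∀ k ≤ n, w (k * δ) + 2 * a * δ ≤ 2 ^ k * (w 0 + 2 * a * δ) := by
    intro k
    induction k with
    | zero => simp
    | succ k ih =>
      intro hk
      have hk' := hgrid k (by omega)
      have hk1 := hgrid (k + 1) hk
      have h := hstep _ hk' _ hk1 (by gcongr; simp)
      have hhalf := mul_le_mul_of_nonneg_right hbδ (hw _ hk1)
      push_cast at h hhalf ⊢
      rw [pow_succ]
      nlinarith [ih (by omega)]
  have hgrowthT := hgrowth n le_rfl
  rw [hnδ] at hgrowthT
  have : 2 * a * δ ≤ 2 * a * T := by gcongr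
  nlinarith [one_le_pow₀ (M₀ := ℝ) (n := n) one_le_two]

theorem intervalIntegral_le_of_ae_le_add_mul_intervalIntegral {φ : ℝ → ℝ} {a b T : ℝ}
    (ha : 0 ≤ a) (hb : 0 ≤ b) (hT : 0 ≤ T) (hφ0 : ∀ t, 0 ≤ φ t) (hφ : IntegrableOn φ (Icc 0 T))
    (hle : ∀ᵐ t ∂volume.restrict (Icc 0 T), φ t ≤ a + b * ∫ τ in 0..t, φ τ) :
    ∫ τ in 0..T, φ τ ≤ 2 ^ (⌈2 * b * T⌉₊ + 1) * (2 * a * T) := by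
  have hint : ∀ s t, 0 ≤ s → s ≤ t → t ≤ T → IntervalIntegrable φ volume s t :=
    fun s t h0s hst htT => (intervalIntegrable_iff_integrableOn_Icc_of_le hst).2
      (hφ.mono_set (Icc_subset_Icc h0s htT))
  have hmono : ∀ s t, 0 ≤ s → s ≤ t → t ≤ T → ∫ τ in 0..s, φ τ ≤ ∫ τ in 0..t, φ τ :=
    fun s t h0s hst htT => intervalIntegral.integral_mono_interval le_rfl h0s hst
      (ae_of_all _ hφ0) (hint 0 t le_rfl (h0s.trans hst) htT)
  have hstep : ∀ s ∈ Icc 0 T, ∀ t ∈ Icc 0 T, s ≤ t →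
      (∫ τ in 0..t, φ τ) - ∫ τ in 0..s, φ τ ≤ (t - s) * (a + b * ∫ τ in 0..t, φ τ) := by
    intro s hs t ht hst
    rw [intervalIntegral.integral_interval_sub_left (hint 0 t le_rfl ht.1 ht.2)
      (hint 0 s le_rfl hs.1 (hst.trans ht.2))]
    calc ∫ τ in s..t, φ τ ≤ ∫ _ in s..t, a + b * ∫ τ in 0..t, φ τ := by
          refine intervalIntegral.integral_mono_ae_restrict hst (hint s t hs.1 hst ht.2)
            intervalIntegrable_const ?_
          filter_upwards [ae_restrict_of_ae_restrict_of_subset (Icc_subset_Icc hs.1 ht.2) hle,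
            ae_restrict_mem measurableSet_Icc] with τ hτ hτst
          have := hmono τ t (hs.1.trans hτst.1) hτst.2 ht.2
          nlinarith
      _ = (t - s) * (a + b * ∫ τ in 0..t, φ τ) := by simp; ring
  simpa using le_two_pow_mul_of_sub_le_mul (w := fun t => ∫ τ in 0..t, φ τ) (b := b) ha hT
    (Nat.succ_pos _) (by push_cast; linarith [Nat.le_ceil (2 * b * T)])
    (fun t ht => intervalIntegral.integral_nonneg ht.1 fun τ _ => hφ0 τ) hstep

section SweepingProcess

variable {H : Type*} [NormedAddCommGroup H] [InnerProductSpace ℝ H] {T : ℝ}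
  {A₀ A₁ : H →L[ℝ] H} {f : ℝ → H} {C : ℝ → Set H} {u₀ : H} {u v : ℝ → H}

theorem SweepSol.norm_le_norm_add_intervalIntegral (hs : SweepSol T A₀ A₁ f C u₀ u v) {t : ℝ}
    (ht : t ∈ Icc 0 T) : ‖u t‖ ≤ ‖u₀‖ + ∫ τ in 0..t, ‖v τ‖ := by
  rw [hs.2.1 t ht]
  grw [norm_add_le, intervalIntegral.norm_integral_le_integral_norm ht.1]

theorem SweepSol.ae_norm_le (hs : SweepSol T A₀ A₁ f C u₀ u v) {c₁ c₂ R F : ℝ} (hc₁ : 0 < c₁)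
    (hc₂ : 0 ≤ c₂) (hR : ∀ t ∈ Icc 0 T, ∃ z ∈ C t, ‖z‖ ≤ R) (hF : ∀ t ∈ Icc 0 T, ‖f t‖ ≤ F)
    (hcoer : ∀ t ∈ Icc (0:ℝ) T, ∀ x ∈ C t, c₁ * ‖x‖ ^ 2 - c₂ ≤ ⟪A₁ x, x⟫) :
    ∀ᵐ t ∂volume.restrict (Icc 0 T), ‖v t‖ ≤
      (c₁ + c₂ + R * ‖A₁‖ + (1 + R) * (‖A₀‖ * ‖u₀‖ + F)) / c₁ +
        (1 + R) * ‖A₀‖ / c₁ * ∫ τ in 0..t, ‖v τ‖ := by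
  filter_upwards [hs.2.2, ae_restrict_mem measurableSet_Icc] with t ⟨hvC, hvi⟩ ht
  obtain ⟨z, hzC, hzR⟩ := hR t ht
  have hR0 : 0 ≤ R := (norm_nonneg z).trans hzR
  have hv := mul_norm_le_of_coercive_of_inner_nonneg A₁ (g := A₀ (u t) - f t) hc₁.le hc₂ hzR
    (hcoer t ht _ hvC) (by simpa only [add_sub_assoc] using hvi z hzC)
  have hg : ‖A₀ (u t) - f t‖ ≤ ‖A₀‖ * (‖u₀‖ + ∫ τ in 0..t, ‖v τ‖) + F :=
    (norm_sub_le _ _).trans <| add_le_add ((A₀.le_opNorm _).trans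
      (by gcongr; exact hs.norm_le_norm_add_intervalIntegral ht)) (hF t ht)
  rw [div_mul_eq_mul_div, ← add_div, le_div_iff₀' hc₁]
  nlinarith [mul_le_mul_of_nonneg_left hg (by positivity : (0:ℝ) ≤ 1 + R)]

end SweepingProcess

theorem boundedness_sol_inner_semicontinuous_general
    {H : Type*} [NormedAddCommGroup H] [InnerProductSpace ℝ H]
    (T : ℝ) (hT : 0 < T) (A₀ A₁ : H →L[ℝ] H)
    (f : ℝ → H) (hf : ContinuousOn f (Icc 0 T))
    (C : ℝ → Set H)
    (hC : ∀ t ∈ Icc (0:ℝ) T, (C t).Nonempty ∧ Convex ℝ (C t))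
    (hisc : ∀ t ∈ Icc (0:ℝ) T, ∀ x ∈ C t, ∀ U : Set H, IsOpen U → x ∈ U →
      ∃ V ∈ nhdsWithin t (Icc (0:ℝ) T), ∀ t' ∈ V ∩ Icc (0:ℝ) T, (C t' ∩ U).Nonempty)
    (c₁ c₂ : ℝ) (hc₁ : 0 < c₁) (hc₂ : 0 < c₂)
    (hcoer : ∀ t ∈ Icc (0:ℝ) T, ∀ x ∈ C t, c₁ * ‖x‖ ^ 2 - c₂ ≤ ⟪A₁ x, x⟫) :
    ∀ u₀ ∈ C 0, ∃ M > (0:ℝ), ∀ u v : ℝ → H, SweepSol T A₀ A₁ f C u₀ u v →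
      (∀ t ∈ Icc (0:ℝ) T, ‖u t‖ ≤ M) ∧ (∫ τ in Icc (0:ℝ) T, ‖v τ‖) ≤ M := by
  intro u₀ _
  have h0 : (0:ℝ) ∈ Icc 0 T := left_mem_Icc.2 hT.le
  obtain ⟨R, hR⟩ := isCompact_Icc.exists_bound_of_innerSemicontinuous (fun t ht => (hC t ht).1)
    fun t ht x hx U hU hxU => by
      obtain ⟨V, hV, hVC⟩ := hisc t ht x hx U hU hxU
      filter_upwards [hV, self_mem_nhdsWithin] with t' h1 h2 using hVC t' ⟨h1, h2⟩
  obtain ⟨F, hF⟩ := isCompact_Icc.exists_bound_of_continuousOn hf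
  have hR0 : 0 ≤ R := let ⟨z, _, hz⟩ := hR 0 h0; (norm_nonneg z).trans hz
  have hF0 : 0 ≤ F := (norm_nonneg _).trans (hF 0 h0)
  set a := (c₁ + c₂ + R * ‖A₁‖ + (1 + R) * (‖A₀‖ * ‖u₀‖ + F)) / c₁
  set b := (1 + R) * ‖A₀‖ / c₁
  refine ⟨‖u₀‖ + 2 ^ (⌈2 * b * T⌉₊ + 1) * (2 * a * T), by positivity, fun u v hs => ?_⟩
  have hvT : ∫ τ in 0..T, ‖v τ‖ ≤ 2 ^ (⌈2 * b * T⌉₊ + 1) * (2 * a * T) :=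
    intervalIntegral_le_of_ae_le_add_mul_intervalIntegral (by positivity) (by positivity) hT.le
      (fun _ => norm_nonneg _) hs.1.norm (hs.ae_norm_le hc₁ hc₂.le hR hF hcoer)
  refine ⟨fun t ht => ?_, ?_⟩
  · have hvt : ∫ τ in 0..t, ‖v τ‖ ≤ ∫ τ in 0..T, ‖v τ‖ :=
      intervalIntegral.integral_mono_interval le_rfl ht.1 ht.2 (ae_of_all _ fun _ => norm_nonneg _)
        ((intervalIntegrable_iff_integrableOn_Icc_of_le hT.le).2 hs.1.norm)
    linarith [hs.norm_le_norm_add_intervalIntegral ht]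
  · rw [integral_Icc_eq_integral_Ioc, ← intervalIntegral.integral_of_le hT.le]
    linarith [norm_nonneg u₀]

theorem boundedness_sol_inner_semicontinuous
    {H : Type*} [NormedAddCommGroup H] [InnerProductSpace ℝ H] [CompleteSpace H]
    (T : ℝ) (hT : 0 < T) (A₀ A₁ : H →L[ℝ] H)
    (hA₀sym : ∀ x y : H, ⟪A₀ x, y⟫ = ⟪x, A₀ y⟫)
    (hA₁sym : ∀ x y : H, ⟪A₁ x, y⟫ = ⟪x, A₁ y⟫)
    (hA₀pos : ∀ x : H, 0 ≤ ⟪A₀ x, x⟫)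
    (hA₁pos : ∀ x : H, 0 ≤ ⟪A₁ x, x⟫)
    (f : ℝ → H) (hf : ContinuousOn f (Icc 0 T))
    (C : ℝ → Set H)
    (hC : ∀ t ∈ Icc (0:ℝ) T, (C t).Nonempty ∧ Convex ℝ (C t))
    (hisc : ∀ t ∈ Icc (0:ℝ) T, ∀ x ∈ C t, ∀ U : Set H, IsOpen U → x ∈ U →
      ∃ V ∈ nhdsWithin t (Icc (0:ℝ) T), ∀ t' ∈ V ∩ Icc (0:ℝ) T, (C t' ∩ U).Nonempty)
    (c₁ c₂ : ℝ) (hc₁ : 0 < c₁) (hc₂ : 0 < c₂)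
    (hcoer : ∀ t ∈ Icc (0:ℝ) T, ∀ x ∈ C t, c₁ * ‖x‖ ^ 2 - c₂ ≤ ⟪A₁ x, x⟫) :
    ∀ u₀ ∈ C 0, ∃ M > (0:ℝ), ∀ u v : ℝ → H, SweepSol T A₀ A₁ f C u₀ u v →
      (∀ t ∈ Icc (0:ℝ) T, ‖u t‖ ≤ M) ∧ (∫ τ in Icc (0:ℝ) T, ‖v τ‖) ≤ M :=
  boundedness_sol_inner_semicontinuous_general T hT A₀ A₁ f hf C hC hisc c₁ c₂ hc₁ hc₂ hcoer
end

section
/- Suppose C(t) is nonempty, closed and convex for every t ∈ [0,T], and let u₀ ∈ C(0). Let (u_k) be a sequence of solutions of the sweeping process (P) with initial value u₀, with Bochner-integrable derivatives (v_k). Let u : [0,T] → H and let v : [0,T] → H be Bochner integrable with u(t) = u(0) + ∫₀ᵗ v(τ) dτ for all t ∈ [0,T]. If ∫₀ᵀ ‖u_k(τ) − u(τ)‖ dτ → 0 and ∫₀ᵀ ‖v_k(τ) − v(τ)‖ dτ → 0 as k → ∞, then u(0) = u₀ and u is a solution of (P) with initial value u₀. In other words, the solution set Sol(P,u₀) is closed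 in the Sobolev space W^{1,1}([0,T], H). -/
open MeasureTheory Set
open scoped RealInnerProductSpace

/-!
Averaging `u₀ - u 0 = (u_k t - u t) - ∫₀ᵗ (v_k - v)` over `t ∈ [0,T]` bounds `T ‖u₀ - u 0‖` by the
`W^{1,1}` distance of `u_k` and `u`, so `u 0 = u₀`. Convergence in `L¹` gives convergence in
measure, hence a common subsequence along which `(u_k t, v_k t) → (u t, v t)` for a.e. `t`.
For fixed `t`, the constraint `v ∈ C t` together with the variational inequality cuts out a closed
subset of `H × H`, so it passes to the limit.
-/

open Filter Topology

section Primitive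

variable {E : Type*} [NormedAddCommGroup E] [NormedSpace ℝ E] {T : ℝ} {g g' w w' : ℝ → E}
  {a a' : E}

lemma integrableOn_Icc_of_eq_add_primitive (hT : 0 ≤ T) (hg : IntegrableOn g (Icc 0 T))
    (hw : ∀ t ∈ Icc (0:ℝ) T, w t = a + ∫ τ in (0:ℝ)..t, g τ) : IntegrableOn w (Icc 0 T) := by
  have hcont : ContinuousOn (fun t => a + ∫ τ in (0:ℝ)..t, g τ) (Icc 0 T) := by
    rw [← uIcc_of_le hT] at hg ⊢
    exact continuousOn_const.add (intervalIntegral.continuousOn_primitive_interval hg)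
  exact hcont.integrableOn_Icc.congr_fun (fun t ht => (hw t ht).symm) measurableSet_Icc

lemma norm_sub_le_of_eq_add_primitive (hg : IntegrableOn g (Icc 0 T))
    (hg' : IntegrableOn g' (Icc 0 T))
    (hw : ∀ t ∈ Icc (0:ℝ) T, w t = a + ∫ τ in (0:ℝ)..t, g τ)
    (hw' : ∀ t ∈ Icc (0:ℝ) T, w' t = a' + ∫ τ in (0:ℝ)..t, g' τ) {t : ℝ} (ht : t ∈ Icc 0 T) :
    ‖a - a'‖ ≤ ‖w t - w' t‖ + ∫ τ in Icc 0 T, ‖g τ - g' τ‖ := by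
  have hsub : Ioc 0 t ⊆ Icc 0 T := fun x hx => ⟨hx.1.le, hx.2.trans ht.2⟩
  have hgt := (intervalIntegrable_iff_integrableOn_Ioc_of_le ht.1).2 (hg.mono_set hsub)
  have hg't := (intervalIntegrable_iff_integrableOn_Ioc_of_le ht.1).2 (hg'.mono_set hsub)
  have hdiff : a - a' = (w t - w' t) - ∫ τ in (0:ℝ)..t, (g τ - g' τ) := by
    rw [intervalIntegral.integral_sub hgt hg't, hw t ht, hw' t ht]
    abel
  have hint : ‖∫ τ in (0:ℝ)..t, (g τ - g' τ)‖ ≤ ∫ τ in Icc 0 T, ‖g τ - g' τ‖ :=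
    calc ‖∫ τ in (0:ℝ)..t, (g τ - g' τ)‖ ≤ ∫ τ in Ioc 0 t, ‖g τ - g' τ‖ := by
          rw [← intervalIntegral.integral_of_le ht.1]
          exact intervalIntegral.norm_integral_le_integral_norm ht.1
      _ ≤ ∫ τ in Icc 0 T, ‖g τ - g' τ‖ :=
          setIntegral_mono_set (hg.sub hg').norm (Eventually.of_forall fun _ => norm_nonneg _)
            hsub.eventuallyLE
  rw [hdiff]
  exact (norm_sub_le _ _).trans (add_le_add_right hint _)

lemma mul_norm_sub_le_of_eq_add_primitive (hT : 0 ≤ T) (hg : IntegrableOn g (Icc 0 T))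
    (hg' : IntegrableOn g' (Icc 0 T))
    (hw : ∀ t ∈ Icc (0:ℝ) T, w t = a + ∫ τ in (0:ℝ)..t, g τ)
    (hw' : ∀ t ∈ Icc (0:ℝ) T, w' t = a' + ∫ τ in (0:ℝ)..t, g' τ) :
    T * ‖a - a'‖ ≤ (∫ τ in Icc 0 T, ‖w τ - w' τ‖) + T * ∫ τ in Icc 0 T, ‖g τ - g' τ‖ := by
  have hnorm : IntegrableOn (fun t => ‖w t - w' t‖) (Icc 0 T) :=
    ((integrableOn_Icc_of_eq_add_primitive hT hg hw).sub
      (integrableOn_Icc_of_eq_add_primitive hT hg' hw')).norm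
  have hconst {c : ℝ} : IntegrableOn (fun _ => c) (Icc (0:ℝ) T) :=
    integrableOn_const measure_Icc_lt_top.ne
  have key : (∫ _ in Icc (0:ℝ) T, ‖a - a'‖) ≤
      ∫ t in Icc (0:ℝ) T, (‖w t - w' t‖ + ∫ τ in Icc 0 T, ‖g τ - g' τ‖) :=
    setIntegral_mono_on hconst (hnorm.add hconst) measurableSet_Icc
      fun t ht => norm_sub_le_of_eq_add_primitive hg hg' hw hw' ht
  rwa [integral_add hnorm hconst, setIntegral_const, setIntegral_const,
    Real.volume_real_Icc_of_le hT, sub_zero, smul_eq_mul, smul_eq_mul] at key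

lemma tendsto_of_eq_add_primitive_of_tendsto_integral_norm_sub (hT : 0 < T)
    {gs ws : ℕ → ℝ → E} {as : ℕ → E} (hgs : ∀ k, IntegrableOn (gs k) (Icc 0 T))
    (hg : IntegrableOn g (Icc 0 T))
    (hws : ∀ k, ∀ t ∈ Icc (0:ℝ) T, ws k t = as k + ∫ τ in (0:ℝ)..t, gs k τ)
    (hw : ∀ t ∈ Icc (0:ℝ) T, w t = a + ∫ τ in (0:ℝ)..t, g τ)
    (hwconv : Tendsto (fun k => ∫ τ in Icc (0:ℝ) T, ‖ws k τ - w τ‖) atTop (𝓝 0))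
    (hgconv : Tendsto (fun k => ∫ τ in Icc (0:ℝ) T, ‖gs k τ - g τ‖) atTop (𝓝 0)) :
    Tendsto as atTop (𝓝 a) := by
  rw [tendsto_iff_norm_sub_tendsto_zero]
  refine squeeze_zero (fun _ => norm_nonneg _) (fun k => ?_)
    (by simpa using (hwconv.const_mul T⁻¹).add hgconv)
  rw [← mul_le_mul_iff_of_pos_left hT, mul_add, mul_inv_cancel_left₀ hT.ne']
  exact mul_norm_sub_le_of_eq_add_primitive hT.le (hgs k) hg (hws k) hw

end Primitive

lemma tendstoInMeasure_of_tendsto_integral_norm_sub {α ι E : Type*} [MeasurableSpace α]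
    {μ : Measure α} [NormedAddCommGroup E] {l : Filter ι} {f : ι → α → E} {g : α → E}
    (hf : ∀ n, Integrable (f n) μ) (hg : Integrable g μ)
    (hfg : Tendsto (fun n => ∫ x, ‖f n x - g x‖ ∂μ) l (𝓝 0)) : TendstoInMeasure μ f l g := by
  refine tendstoInMeasure_of_tendsto_eLpNorm one_ne_zero (fun n => (hf n).aestronglyMeasurable)
    hg.aestronglyMeasurable ?_
  have hnorm (n : ι) : eLpNorm (f n - g) 1 μ = ENNReal.ofReal (∫ x, ‖f n x - g x‖ ∂μ) := by
    rw [eLpNorm_one_eq_lintegral_enorm, ← ofReal_integral_norm_eq_lintegral_enorm ((hf n).sub hg)]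
    rfl
  simpa [hnorm] using ENNReal.tendsto_ofReal hfg

lemma MeasureTheory.TendstoInMeasure.exists_seq_tendsto_ae_prod {α E F : Type*} [MeasurableSpace α]
    {μ : Measure α} [PseudoEMetricSpace E] [PseudoEMetricSpace F] {f : ℕ → α → E} {g : α → E}
    {f' : ℕ → α → F} {g' : α → F} (hf : TendstoInMeasure μ f atTop g)
    (hf' : TendstoInMeasure μ f' atTop g') :
    ∃ ns : ℕ → ℕ, StrictMono ns ∧
      ∀ᵐ x ∂μ, Tendsto (fun i => (f (ns i) x, f' (ns i) x)) atTop (𝓝 (g x, g' x)) := by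
  obtain ⟨ns, hns, hf_ae⟩ := hf.exists_seq_tendsto_ae
  obtain ⟨ms, hms, hf'_ae⟩ := (hf'.comp hns.tendsto_atTop).exists_seq_tendsto_ae
  refine ⟨ns ∘ ms, hns.comp hms, ?_⟩
  filter_upwards [hf_ae, hf'_ae] with x hx hx'
  exact (hx.comp hms.tendsto_atTop).prodMk_nhds hx'

lemma isClosed_setOf_variationalInequality {H : Type*} [NormedAddCommGroup H]
    [InnerProductSpace ℝ H] (A₀ A₁ : H →L[ℝ] H) (F : H) {K : Set H} (hK : IsClosed K) :
    IsClosed {p : H × H | p.2 ∈ K ∧ ∀ z ∈ K, 0 ≤ ⟪A₁ p.2 + A₀ p.1 - F, z - p.2⟫} := by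
  rw [ofPred_and, ofPred_forall]
  refine (hK.preimage continuous_snd).inter (isClosed_iInter fun z => ?_)
  simp only [ofPred_forall]
  exact isClosed_iInter fun _ => isClosed_le continuous_const (by fun_prop)

theorem solution_set_closed_in_W11_general
    {H : Type*} [NormedAddCommGroup H] [InnerProductSpace ℝ H]
    (T : ℝ) (hT : 0 < T) (A₀ A₁ : H →L[ℝ] H)
    (f : ℝ → H)
    (C : ℝ → Set H)
    (hC : ∀ t ∈ Icc (0:ℝ) T, (C t).Nonempty ∧ IsClosed (C t) ∧ Convex ℝ (C t))
    (u₀ : H)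
    (uk vk : ℕ → ℝ → H)
    (hk : ∀ k, SweepSol T A₀ A₁ f C u₀ (uk k) (vk k))
    (u v : ℝ → H)
    (hv : IntegrableOn v (Icc 0 T))
    (hu : ∀ t ∈ Icc (0:ℝ) T, u t = u 0 + ∫ τ in (0:ℝ)..t, v τ)
    (huconv : Filter.Tendsto (fun k => ∫ τ in Icc (0:ℝ) T, ‖uk k τ - u τ‖)
      Filter.atTop (nhds 0))
    (hvconv : Filter.Tendsto (fun k => ∫ τ in Icc (0:ℝ) T, ‖vk k τ - v τ‖)
      Filter.atTop (nhds 0)) :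
    u 0 = u₀ ∧ SweepSol T A₀ A₁ f C u₀ u v := by
  have hu0 : u 0 = u₀ := tendsto_nhds_unique
    (tendsto_of_eq_add_primitive_of_tendsto_integral_norm_sub hT (fun k => (hk k).1) hv
      (fun k => (hk k).2.1) hu huconv hvconv) tendsto_const_nhds
  have hukInt (k : ℕ) : IntegrableOn (uk k) (Icc 0 T) :=
    integrableOn_Icc_of_eq_add_primitive hT.le (hk k).1 (hk k).2.1
  have huInt : IntegrableOn u (Icc 0 T) := integrableOn_Icc_of_eq_add_primitive hT.le hv hu
  obtain ⟨ns, -, hns⟩ :=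
    (tendstoInMeasure_of_tendsto_integral_norm_sub hukInt huInt huconv).exists_seq_tendsto_ae_prod
      (tendstoInMeasure_of_tendsto_integral_norm_sub (fun k => (hk k).1) hv hvconv)
  refine ⟨hu0, hv, fun t ht => hu0 ▸ hu t ht, ?_⟩
  filter_upwards [ae_restrict_mem measurableSet_Icc, ae_all_iff.2 fun k => (hk k).2.2, hns]
    with t ht hkt hlim
  exact (isClosed_setOf_variationalInequality A₀ A₁ (f t) (hC t ht).2.1).mem_of_tendsto hlim
    (Eventually.of_forall fun i => hkt (ns i))

theorem solution_set_closed_in_W11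
    {H : Type*} [NormedAddCommGroup H] [InnerProductSpace ℝ H] [CompleteSpace H]
    (T : ℝ) (hT : 0 < T) (A₀ A₁ : H →L[ℝ] H)
    (hA₀sym : ∀ x y : H, ⟪A₀ x, y⟫ = ⟪x, A₀ y⟫)
    (hA₁sym : ∀ x y : H, ⟪A₁ x, y⟫ = ⟪x, A₁ y⟫)
    (hA₀pos : ∀ x : H, 0 ≤ ⟪A₀ x, x⟫)
    (hA₁pos : ∀ x : H, 0 ≤ ⟪A₁ x, x⟫)
    (f : ℝ → H) (hf : ContinuousOn f (Icc 0 T))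
    (C : ℝ → Set H)
    (hC : ∀ t ∈ Icc (0:ℝ) T, (C t).Nonempty ∧ IsClosed (C t) ∧ Convex ℝ (C t))
    (u₀ : H) (hu₀ : u₀ ∈ C 0)
    (uk vk : ℕ → ℝ → H)
    (hk : ∀ k, SweepSol T A₀ A₁ f C u₀ (uk k) (vk k))
    (u v : ℝ → H)
    (hv : IntegrableOn v (Icc 0 T))
    (hu : ∀ t ∈ Icc (0:ℝ) T, u t = u 0 + ∫ τ in (0:ℝ)..t, v τ)
    (huconv : Filter.Tendsto (fun k => ∫ τ in Icc (0:ℝ) T, ‖uk k τ - u τ‖)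
      Filter.atTop (nhds 0))
    (hvconv : Filter.Tendsto (fun k => ∫ τ in Icc (0:ℝ) T, ‖vk k τ - v τ‖)
      Filter.atTop (nhds 0)) :
    u 0 = u₀ ∧ SweepSol T A₀ A₁ f C u₀ u v :=
  solution_set_closed_in_W11_general T hT A₀ A₁ f C hC u₀ uk vk hk u v hv hu huconv hvconv
end

section
/- Suppose C(t) is nonempty, closed and convex for every t ∈ [0,T], and A₀ = 0. Then for every u₀ ∈ C(0) the solution set of the sweeping process (P) with initial value u₀ is convex: if u and w are solutions of (P) with initial value u₀ and λ ∈ [0,1], then (1−λ)u + λw is a solution of (P) with initial value u₀. -/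
open MeasureTheory Set
open scoped RealInnerProductSpace

/-- A symmetric positive semidefinite operator vanishes on vectors where its quadratic
form vanishes. -/
lemma psd_apply_eq_zero {H : Type*} [NormedAddCommGroup H] [InnerProductSpace ℝ H]
    (A : H →L[ℝ] H) (hsym : ∀ x y : H, ⟪A x, y⟫ = ⟪x, A y⟫)
    (hpos : ∀ x : H, 0 ≤ ⟪A x, x⟫) (x : H) (hx : ⟪A x, x⟫ ≤ 0) : A x = 0 := by
  have hx0 : ⟪A x, x⟫ = 0 := le_antisymm hx (hpos x)
  have key : ∀ y : H, ⟪A x, y⟫ = 0 := by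
    intro y
    by_contra hc
    obtain ⟨c, hcdef⟩ : ∃ c : ℝ, ⟪A x, y⟫ = c := ⟨_, rfl⟩
    obtain ⟨q, hqdef⟩ : ∃ q : ℝ, ⟪A y, y⟫ = q := ⟨_, rfl⟩
    rw [hcdef] at hc
    have hq : 0 ≤ q := hqdef ▸ hpos y
    have hyx : ⟪A y, x⟫ = c := by
      rw [hsym y x, real_inner_comm, hcdef]
    have hgen : ∀ s : ℝ, 0 ≤ 2 * s * c + s ^ 2 * q := by
      intro s
      have h1 : 0 ≤ ⟪A (x + s • y), x + s • y⟫ := hpos _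
      rw [map_add, A.map_smul] at h1
      simp only [inner_add_left, inner_add_right, real_inner_smul_left,
        real_inner_smul_right] at h1
      rw [hx0, hcdef, hyx, hqdef] at h1
      nlinarith [h1]
    have hq1 : 0 < q + 1 := by linarith
    have hc2 : 0 < c ^ 2 := by positivity
    have h2 : 0 ≤ (2 * (-c / (q + 1)) * c + (-c / (q + 1)) ^ 2 * q) * (q + 1) ^ 2 :=
      mul_nonneg (hgen (-c / (q + 1))) (sq_nonneg _)
    have h3 : (2 * (-c / (q + 1)) * c + (-c / (q + 1)) ^ 2 * q) * (q + 1) ^ 2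
        = -2 * c ^ 2 * (q + 1) + c ^ 2 * q := by
      field_simp
    rw [h3] at h2
    nlinarith [mul_pos hc2 (show (0:ℝ) < q + 2 by linarith)]
  have := key (A x)
  rwa [real_inner_self_eq_norm_sq, pow_eq_zero_iff (by norm_num), norm_eq_zero] at this

theorem solution_set_convex_of_A0_eq_zero
    {H : Type*} [NormedAddCommGroup H] [InnerProductSpace ℝ H] [CompleteSpace H]
    (T : ℝ) (hT : 0 < T) (A₀ A₁ : H →L[ℝ] H)
    (hA₀ : A₀ = 0)
    (hA₁sym : ∀ x y : H, ⟪A₁ x, y⟫ = ⟪x, A₁ y⟫)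
    (hA₁pos : ∀ x : H, 0 ≤ ⟪A₁ x, x⟫)
    (f : ℝ → H) (hf : ContinuousOn f (Icc 0 T))
    (C : ℝ → Set H)
    (hC : ∀ t ∈ Icc (0:ℝ) T, (C t).Nonempty ∧ IsClosed (C t) ∧ Convex ℝ (C t))
    (u₀ : H) (hu₀ : u₀ ∈ C 0)
    (u w vu vw : ℝ → H)
    (hu : SweepSol T A₀ A₁ f C u₀ u vu)
    (hw : SweepSol T A₀ A₁ f C u₀ w vw)
    (lam : ℝ) (hlam : lam ∈ Icc (0:ℝ) 1) :
    ∃ v : ℝ → H,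
      SweepSol T A₀ A₁ f C u₀ (fun t => (1 - lam) • u t + lam • w t) v := by
  obtain ⟨hlam0, hlam1⟩ := hlam
  obtain ⟨hui, hueq, huae⟩ := hu
  obtain ⟨hwi, hweq, hwae⟩ := hw
  refine ⟨fun t => (1 - lam) • vu t + lam • vw t, ?_, ?_, ?_⟩
  · exact ((hui.smul (1 - lam)).add (hwi.smul lam))
  · intro t ht
    have hsub : Icc (0:ℝ) t ⊆ Icc 0 T := Icc_subset_Icc le_rfl ht.2
    have huint : IntervalIntegrable vu volume 0 t := by
      rw [intervalIntegrable_iff_integrableOn_Icc_of_le ht.1]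
      exact hui.mono_set hsub
    have hwint : IntervalIntegrable vw volume 0 t := by
      rw [intervalIntegrable_iff_integrableOn_Icc_of_le ht.1]
      exact hwi.mono_set hsub
    have h1 : IntervalIntegrable (fun τ => (1 - lam) • vu τ) volume 0 t :=
      huint.smul (1 - lam)
    have h2 : IntervalIntegrable (fun τ => lam • vw τ) volume 0 t := hwint.smul lam
    show (1 - lam) • u t + lam • w t = u₀ + ∫ τ in (0:ℝ)..t, ((1 - lam) • vu τ + lam • vw τ)
    rw [hueq t ht, hweq t ht, intervalIntegral.integral_add h1 h2,
      intervalIntegral.integral_smul, intervalIntegral.integral_smul]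
    module
  · have hmem : ∀ᵐ t ∂(volume.restrict (Icc (0:ℝ) T)), t ∈ Icc (0:ℝ) T :=
      ae_restrict_mem measurableSet_Icc
    filter_upwards [huae, hwae, hmem] with t ⟨hva, hVIa⟩ ⟨hvb, hVIb⟩ ht
    set a := vu t
    set b := vw t
    obtain ⟨-, -, hconv⟩ := hC t ht
    constructor
    · exact hconv hva hvb (by linarith) hlam0 (by ring)
    · intro z hz
      subst hA₀
      simp only [ContinuousLinearMap.zero_apply, add_zero] at hVIa hVIb ⊢
      have h1 : 0 ≤ ⟪A₁ a - f t, b - a⟫ := hVIa b hvb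
      have h2 : 0 ≤ ⟪A₁ b - f t, a - b⟫ := hVIb a hva
      have hkey : ⟪A₁ (a - b), a - b⟫ ≤ 0 := by
        rw [map_sub]
        simp only [inner_sub_left, inner_sub_right] at h1 h2 ⊢
        linarith
      have hAab : A₁ a = A₁ b := by
        have := psd_apply_eq_zero A₁ hA₁sym hA₁pos (a - b) hkey
        rw [map_sub, sub_eq_zero] at this
        exact this
      have hAv : A₁ ((1 - lam) • a + lam • b) = A₁ a := by
        rw [map_add, A₁.map_smul, A₁.map_smul, hAab, ← add_smul]
        norm_num
      rw [hAv]
      have hzv : z - ((1 - lam) • a + lam • b) = (1 - lam) • (z - a) + lam • (z - b) := by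
        module
      rw [hzv, inner_add_right, inner_smul_right, inner_smul_right]
      have h3 : 0 ≤ ⟪A₁ a - f t, z - a⟫ := hVIa z hz
      have h4 : 0 ≤ ⟪A₁ a - f t, z - b⟫ := by rw [hAab]; exact hVIb z hz
      have := mul_nonneg (by linarith : (0:ℝ) ≤ 1 - lam) h3
      have := mul_nonneg hlam0 h4
      linarith
end

section
/- Suppose C(t) is nonempty, closed and convex for every t ∈ [0,T]. If u and w are two solutions of the sweeping process (P) with the same initial value u₀ ∈ C(0), with Bochner-integrable derivatives v_u and v_w respectively, then the difference x := w − u satisfies: x(0) = 0, A₀ x(t) = 0 for every t ∈ [0,T], and for almost every t ∈ [0,T] both v_w(t) − v_u(t) ∈ C(t) − v_u(t) and A₀(v_w(t) − v_u(t)) = 0. In other words, Sol(P,u₀) ⊆ u + K, where K is the set of all W^{1,1} functions y with y(0) = 0 whose derivative lies in (C(t) − v_u(t)) ∩ ker A₀ for almost every t. -/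
open MeasureTheory Set
open scoped RealInnerProductSpace Topology

theorem ContinuousLinearMap.IsPositive.apply_eq_zero_of_inner_map_self_eq_zero
    {H : Type*} [NormedAddCommGroup H] [InnerProductSpace ℝ H] {A : H →L[ℝ] H}
    (hA : A.IsPositive) {y : H} (hy : ⟪A y, y⟫ = 0) : A y = 0 := by
  have hsymm : ⟪A (A y), y⟫ = ⟪A y, A y⟫ := hA.isSymmetric _ _
  -- a quadratic in `l` without constant term stays nonnegative only if its linear term vanishes
  have hquad : ∀ l : ℝ, 0 ≤ ⟪A (A y), A y⟫ * (l * l) + 2 * ⟪A y, A y⟫ * l + 0 := by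
    intro l
    have h := hA.inner_nonneg_left (y + l • A y)
    simp only [map_add, map_smul, inner_add_left, inner_add_right, real_inner_smul_left,
      real_inner_smul_right, hsymm, hy] at h
    linarith
  have hdisc := discrim_le_zero hquad
  rw [discrim] at hdisc
  have hAy : ⟪A y, A y⟫ = 0 := by nlinarith
  exact inner_self_eq_zero.1 hAy

theorem integral_prod_eq_two_smul_integral_Iic_of_symmetric {E : Type*} [NormedAddCommGroup E]
    [NormedSpace ℝ E] {μ : Measure ℝ} [SFinite μ] [NullSingletonClass μ] {F : ℝ × ℝ → E}
    (hF : Integrable F (μ.prod μ)) (hsymm : ∀ x y, F (x, y) = F (y, x)) :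
    ∫ z, F z ∂μ.prod μ = 2 • ∫ x, ∫ y in Iic x, F (x, y) ∂μ ∂μ := by
  have hL : MeasurableSet {z : ℝ × ℝ | z.2 ≤ z.1} := measurableSet_le measurable_snd measurable_fst
  have hlower : ∫ z in {z : ℝ × ℝ | z.2 ≤ z.1}, F z ∂μ.prod μ =
      ∫ x, ∫ y in Iic x, F (x, y) ∂μ ∂μ := by
    rw [← integral_indicator hL, integral_prod _ (hF.indicator hL)]
    congr with x
    rw [← integral_indicator measurableSet_Iic]
    rfl
  -- reflect across the diagonal, which is `μ.prod μ`-null since `μ` has no atoms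
  have hupper : ∫ z in {z : ℝ × ℝ | z.2 ≤ z.1}ᶜ, F z ∂μ.prod μ =
      ∫ x, ∫ y in Iic x, F (x, y) ∂μ ∂μ := by
    rw [← integral_indicator hL.compl, ← integral_prod_swap,
      integral_prod (fun z => ({z : ℝ × ℝ | z.2 ≤ z.1}ᶜ.indicator F) z.swap)
        (hF.indicator hL.compl).swap]
    congr with x
    rw [integral_Iic_eq_integral_Iio, ← integral_indicator measurableSet_Iio]
    congr with y
    simp [indicator, hsymm x y]
  rw [← integral_add_compl hL hF, hlower, hupper, two_smul]

/-- The chain rule `⟪A X, X⟫' = 2 ⟪A X, X'⟫` in integrated form, for `X` merely absolutely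
continuous. -/
theorem inner_map_intervalIntegral_self {H : Type*} [NormedAddCommGroup H]
    [InnerProductSpace ℝ H] [CompleteSpace H] {A : H →L[ℝ] H} (hA : A.IsSymmetric)
    {g : ℝ → H} {a b : ℝ} (hab : a ≤ b) (hg : IntervalIntegrable g volume a b) :
    ⟪A (∫ τ in a..b, g τ), ∫ τ in a..b, g τ⟫ =
      2 * ∫ σ in a..b, ⟪A (∫ τ in a..σ, g τ), g σ⟫ := by
  set μ := volume.restrict (Ioc a b)
  have hgμ : Integrable g μ := (intervalIntegrable_iff_integrableOn_Ioc_of_le hab).1 hg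
  have hF : Integrable (fun z : ℝ × ℝ => ⟪A (g z.1), g z.2⟫) (μ.prod μ) :=
    (A.integrable_comp hgμ).op_fst_snd (by fun_prop) ⟨1, fun x y => by
      simpa using norm_inner_le_norm (𝕜 := ℝ) x y⟩ hgμ
  calc ⟪A (∫ τ in a..b, g τ), ∫ τ in a..b, g τ⟫
      = ⟪∫ σ, A (g σ) ∂μ, ∫ τ, g τ ∂μ⟫ := by
        rw [intervalIntegral.integral_of_le hab, A.integral_comp_comm hgμ]
    _ = ∫ z, ⟪A (g z.1), g z.2⟫ ∂μ.prod μ :=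
        (integral_prod_bilin (innerSL ℝ) (A.integrable_comp hgμ) hgμ).symm
    _ = 2 • ∫ σ, ∫ τ in Iic σ, ⟪A (g σ), g τ⟫ ∂μ ∂μ :=
        integral_prod_eq_two_smul_integral_Iic_of_symmetric hF fun σ τ => by
          rw [hA.apply_clm, real_inner_comm]
    _ = 2 * ∫ σ in a..b, ⟪A (∫ τ in a..σ, g τ), g σ⟫ := by
        rw [nsmul_eq_mul, Nat.cast_ofNat, intervalIntegral.integral_of_le hab]
        congr 1
        refine setIntegral_congr_fun measurableSet_Ioc fun σ hσ => ?_
        have hgσ : IntegrableOn g (Ioc a σ) := IntegrableOn.mono_set hgμ (Ioc_subset_Ioc_right hσ.2)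
        rw [Measure.restrict_restrict measurableSet_Iic, Iic_inter_Ioc_of_le hσ.2,
          integral_inner hgσ, ← intervalIntegral.integral_of_le hσ.1.le, hA.apply_clm]
        exact real_inner_comm _ _

theorem ContinuousLinearMap.IsPositive.apply_intervalIntegral_eq_zero_of_ae_inner_nonpos {H : Type*}
    [NormedAddCommGroup H] [InnerProductSpace ℝ H] [CompleteSpace H] {A : H →L[ℝ] H}
    (hA : A.IsPositive) {g : ℝ → H} {a b : ℝ} (hg : IntervalIntegrable g volume a b)
    (hnonpos : ∀ᵐ σ ∂volume.restrict (Icc a b), ⟪A (∫ τ in a..σ, g τ), g σ⟫ ≤ 0)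
    {t : ℝ} (ht : t ∈ Icc a b) : A (∫ τ in a..t, g τ) = 0 := by
  refine hA.apply_eq_zero_of_inner_map_self_eq_zero (le_antisymm ?_ (hA.inner_nonneg_left _))
  have hgt : IntervalIntegrable g volume a t :=
    hg.mono_set (uIcc_subset_uIcc_left (Icc_subset_uIcc ht))
  rw [inner_map_intervalIntegral_self hA.isSymmetric ht.1 hgt,
    intervalIntegral.integral_of_le ht.1]
  have hsub : Ioc a t ⊆ Icc a b := Ioc_subset_Icc_self.trans (Icc_subset_Icc_right ht.2)
  have := integral_nonpos_of_ae (ae_restrict_of_ae_restrict_of_subset hsub hnonpos)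
  linarith

theorem ae_eq_zero_of_forall_intervalIntegral_eq_zero {E : Type*} [NormedAddCommGroup E]
    [NormedSpace ℝ E] [CompleteSpace E] {f : ℝ → E} {a b : ℝ}
    (hf : IntervalIntegrable f volume a b) (h : ∀ t ∈ Icc a b, ∫ τ in a..t, f τ = 0) :
    ∀ᵐ t ∂volume.restrict (Icc a b), f t = 0 := by
  rw [ae_restrict_iff' measurableSet_Icc]
  filter_upwards [hf.ae_hasDerivAt_integral, Measure.ae_ne volume a, Measure.ae_ne volume b]
    with t hderiv hta htb ht
  have hzero : (fun s => ∫ τ in a..s, f τ) =ᶠ[𝓝 t] fun _ => 0 :=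
    Filter.eventually_of_mem (Ioo_mem_nhds (ht.1.lt_of_ne' hta) (ht.2.lt_of_ne htb))
      fun s hs => h s (Ioo_subset_Icc_self hs)
  exact (hderiv (Icc_subset_uIcc ht) a left_mem_uIcc).unique
    ((hasDerivAt_const t 0).congr_of_eventuallyEq hzero)

theorem inner_sub_sub_nonpos_of_forall_inner_nonneg {H : Type*} [NormedAddCommGroup H]
    [InnerProductSpace ℝ H] {C : Set H} {p q x y : H} (hx : x ∈ C) (hy : y ∈ C)
    (hp : ∀ z ∈ C, 0 ≤ ⟪p, z - x⟫) (hq : ∀ z ∈ C, 0 ≤ ⟪q, z - y⟫) :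
    ⟪q - p, y - x⟫ ≤ 0 := by
  have hpy := hp y hy
  have hqx := hq x hx
  rw [← neg_sub y x, inner_neg_right] at hqx
  rw [inner_sub_left]
  linarith

namespace SweepSol

variable {H : Type*} [NormedAddCommGroup H] [InnerProductSpace ℝ H] {T : ℝ} {A₀ A₁ : H →L[ℝ] H}
  {f : ℝ → H} {C : ℝ → Set H} {u₀ : H} {u w v v' : ℝ → H}

theorem intervalIntegrable_deriv (hu : SweepSol T A₀ A₁ f C u₀ u v) {t : ℝ} (ht : t ∈ Icc 0 T) :
    IntervalIntegrable v volume 0 t :=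
  (intervalIntegrable_iff_integrableOn_Icc_of_le ht.1).2 (hu.1.mono_set (Icc_subset_Icc_right ht.2))

theorem sub_eq_intervalIntegral (hu : SweepSol T A₀ A₁ f C u₀ u v)
    (hw : SweepSol T A₀ A₁ f C u₀ w v') {t : ℝ} (ht : t ∈ Icc 0 T) :
    w t - u t = ∫ τ in 0..t, (v' τ - v τ) := by
  rw [hu.2.1 t ht, hw.2.1 t ht, add_sub_add_left_eq_sub,
    intervalIntegral.integral_sub (hw.intervalIntegrable_deriv ht)
      (hu.intervalIntegrable_deriv ht)]

theorem ae_inner_sub_nonpos_s14 (hA₁ : ∀ x, 0 ≤ ⟪A₁ x, x⟫) (hu : SweepSol T A₀ A₁ f C u₀ u v)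
    (hw : SweepSol T A₀ A₁ f C u₀ w v') :
    ∀ᵐ t ∂volume.restrict (Icc 0 T), ⟪A₀ (w t - u t), v' t - v t⟫ ≤ 0 := by
  filter_upwards [hu.2.2, hw.2.2] with t ⟨hv, hvVI⟩ ⟨hv', hv'VI⟩
  have hmono := inner_sub_sub_nonpos_of_forall_inner_nonneg hv hv' hvVI hv'VI
  have hdiff : A₁ (v' t) + A₀ (w t) - f t - (A₁ (v t) + A₀ (u t) - f t) =
      A₁ (v' t - v t) + A₀ (w t - u t) := by
    simp only [map_sub]; abel
  rw [hdiff, inner_add_left] at hmono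
  linarith [hA₁ (v' t - v t)]

end SweepSol

theorem solution_set_outer_estimate_general
    {H : Type*} [NormedAddCommGroup H] [InnerProductSpace ℝ H] [CompleteSpace H]
    (T : ℝ) (hT : 0 < T) (A₀ A₁ : H →L[ℝ] H)
    (hA₀sym : ∀ x y : H, ⟪A₀ x, y⟫ = ⟪x, A₀ y⟫)
    (hA₀pos : ∀ x : H, 0 ≤ ⟪A₀ x, x⟫)
    (hA₁pos : ∀ x : H, 0 ≤ ⟪A₁ x, x⟫)
    (f : ℝ → H)
    (C : ℝ → Set H)
    (u₀ : H)
    (u w vu vw : ℝ → H)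
    (hu : SweepSol T A₀ A₁ f C u₀ u vu)
    (hw : SweepSol T A₀ A₁ f C u₀ w vw) :
    (w 0 - u 0 = 0) ∧
    (∀ t ∈ Icc (0:ℝ) T, A₀ (w t - u t) = 0) ∧
    (∀ᵐ t ∂(volume.restrict (Icc (0:ℝ) T)),
      (∃ c ∈ C t, vw t - vu t = c - vu t) ∧ A₀ (vw t - vu t) = 0) := by
  have hA₀ : A₀.IsPositive := (A₀.isPositive_iff).2 ⟨hA₀sym, hA₀pos⟩
  have hTmem : T ∈ Icc 0 T := ⟨hT.le, le_rfl⟩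
  have hg : IntervalIntegrable (fun τ => vw τ - vu τ) volume 0 T :=
    (hw.intervalIntegrable_deriv hTmem).sub (hu.intervalIntegrable_deriv hTmem)
  have hker : ∀ t ∈ Icc (0:ℝ) T, A₀ (w t - u t) = 0 := by
    intro t ht
    rw [hu.sub_eq_intervalIntegral hw ht]
    refine hA₀.apply_intervalIntegral_eq_zero_of_ae_inner_nonpos hg ?_ ht
    filter_upwards [hu.ae_inner_sub_nonpos_s14 hA₁pos hw, ae_restrict_mem measurableSet_Icc]
      with σ hσ hσT
    rwa [← hu.sub_eq_intervalIntegral hw hσT]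
  refine ⟨by simpa using hu.sub_eq_intervalIntegral hw ⟨le_rfl, hT.le⟩, hker, ?_⟩
  have hA₀g := ae_eq_zero_of_forall_intervalIntegral_eq_zero
    (⟨A₀.integrable_comp hg.1, A₀.integrable_comp hg.2⟩ :
      IntervalIntegrable (fun τ => A₀ (vw τ - vu τ)) volume 0 T)
    fun t ht => by
      rw [A₀.intervalIntegral_comp_comm
          ((hw.intervalIntegrable_deriv ht).sub (hu.intervalIntegrable_deriv ht)),
        ← hu.sub_eq_intervalIntegral hw ht, hker t ht]
  filter_upwards [hA₀g, hw.2.2] with t hA₀t ⟨hvw, _⟩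
  exact ⟨⟨vw t, hvw, rfl⟩, hA₀t⟩

theorem solution_set_outer_estimate
    {H : Type*} [NormedAddCommGroup H] [InnerProductSpace ℝ H] [CompleteSpace H]
    (T : ℝ) (hT : 0 < T) (A₀ A₁ : H →L[ℝ] H)
    (hA₀sym : ∀ x y : H, ⟪A₀ x, y⟫ = ⟪x, A₀ y⟫)
    (hA₁sym : ∀ x y : H, ⟪A₁ x, y⟫ = ⟪x, A₁ y⟫)
    (hA₀pos : ∀ x : H, 0 ≤ ⟪A₀ x, x⟫)
    (hA₁pos : ∀ x : H, 0 ≤ ⟪A₁ x, x⟫)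
    (f : ℝ → H) (hf : ContinuousOn f (Icc 0 T))
    (C : ℝ → Set H)
    (hC : ∀ t ∈ Icc (0:ℝ) T, (C t).Nonempty ∧ IsClosed (C t) ∧ Convex ℝ (C t))
    (u₀ : H) (hu₀ : u₀ ∈ C 0)
    (u w vu vw : ℝ → H)
    (hu : SweepSol T A₀ A₁ f C u₀ u vu)
    (hw : SweepSol T A₀ A₁ f C u₀ w vw) :
    (w 0 - u 0 = 0) ∧
    (∀ t ∈ Icc (0:ℝ) T, A₀ (w t - u t) = 0) ∧
    (∀ᵐ t ∂(volume.restrict (Icc (0:ℝ) T)),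
      (∃ c ∈ C t, vw t - vu t = c - vu t) ∧ A₀ (vw t - vu t) = 0) :=
  solution_set_outer_estimate_general T hT A₀ A₁ hA₀sym hA₀pos hA₁pos f C u₀ u w vu vw hu hw
end

section
/- Suppose C(t) is nonempty, closed and convex for every t ∈ [0,T], A₁ = 0, and ⟨f(t), x⟩ = 0 for every t ∈ [0,T] and every x ∈ ker A₀. Let u be a solution of the sweeping process (P) with initial value u₀ ∈ C(0), with Bochner-integrable derivative v_u. If x : [0,T] → H is given by x(t) = ∫₀ᵗ w(τ) dτ for some Bochner-integrable w : [0,T] → H satisfying, for almost every t ∈ [0,T], w(t) + v_u(t) ∈ C(t) and A₀ w(t) = 0, then the function u + x is a solution of (P) with initial value u₀. -/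
open MeasureTheory Set
open scoped RealInnerProductSpace

theorem translation_by_kernel_direction_is_solution
    {H : Type*} [NormedAddCommGroup H] [InnerProductSpace ℝ H] [CompleteSpace H]
    (T : ℝ) (hT : 0 < T) (A₀ A₁ : H →L[ℝ] H)
    (hA₀sym : ∀ x y : H, ⟪A₀ x, y⟫ = ⟪x, A₀ y⟫)
    (hA₀pos : ∀ x : H, 0 ≤ ⟪A₀ x, x⟫)
    (hA₁ : A₁ = 0)
    (f : ℝ → H) (hf : ContinuousOn f (Icc 0 T))
    (hperp : ∀ t ∈ Icc (0:ℝ) T, ∀ x : H, A₀ x = 0 → ⟪f t, x⟫ = 0)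
    (C : ℝ → Set H)
    (hC : ∀ t ∈ Icc (0:ℝ) T, (C t).Nonempty ∧ IsClosed (C t) ∧ Convex ℝ (C t))
    (u₀ : H) (hu₀ : u₀ ∈ C 0)
    (u vu : ℝ → H)
    (hu : SweepSol T A₀ A₁ f C u₀ u vu)
    (w : ℝ → H) (hwint : IntegrableOn w (Icc 0 T))
    (hw : ∀ᵐ t ∂(volume.restrict (Icc (0:ℝ) T)), w t + vu t ∈ C t ∧ A₀ (w t) = 0)
    (x : ℝ → H) (hx : ∀ t ∈ Icc (0:ℝ) T, x t = ∫ τ in (0:ℝ)..t, w τ) :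
    ∃ v : ℝ → H, SweepSol T A₀ A₁ f C u₀ (fun t => u t + x t) v := by
  obtain ⟨hvint, hueq, hae⟩ := hu
  have hwi : ∀ t ∈ Icc (0:ℝ) T, IntervalIntegrable w volume 0 t := by
    intro t ht
    apply IntegrableOn.intervalIntegrable
    rw [uIcc_of_le ht.1]
    exact hwint.mono_set (Icc_subset_Icc le_rfl ht.2)
  have hvi : ∀ t ∈ Icc (0:ℝ) T, IntervalIntegrable vu volume 0 t := by
    intro t ht
    apply IntegrableOn.intervalIntegrable
    rw [uIcc_of_le ht.1]
    exact hvint.mono_set (Icc_subset_Icc le_rfl ht.2)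
  have hxzero : ∀ t ∈ Icc (0:ℝ) T, A₀ (x t) = 0 := by
    intro t ht
    rw [hx t ht, ← ContinuousLinearMap.intervalIntegral_comp_comm A₀ (hwi t ht)]
    have h0 : ∀ᵐ τ ∂(volume.restrict (Ioc 0 t)), A₀ (w τ) = 0 := by
      have hsub : Ioc (0:ℝ) t ⊆ Icc 0 T := fun τ hτ => ⟨le_of_lt hτ.1, hτ.2.trans ht.2⟩
      have h' : ∀ᵐ τ ∂(volume.restrict (Icc (0:ℝ) T)), A₀ (w τ) = 0 := by
        filter_upwards [hw] with τ hτ using hτ.2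
      exact ae_restrict_of_ae_restrict_of_subset hsub h'
    rw [intervalIntegral.integral_of_le ht.1]
    exact integral_eq_zero_of_ae h0
  refine ⟨fun t => vu t + w t, hvint.add hwint, ?_, ?_⟩
  · intro t ht
    simp only
    rw [hueq t ht, hx t ht, intervalIntegral.integral_add (hvi t ht) (hwi t ht)]
    abel
  · filter_upwards [hae, hw, ae_restrict_mem measurableSet_Icc] with t hae' hw' ht
    refine ⟨by rw [add_comm]; exact hw'.1, fun z hz => ?_⟩
    have key := hae'.2 z hz
    have h1 : ⟪A₀ (u t), w t⟫ = 0 := by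
      rw [hA₀sym, hw'.2, inner_zero_right]
    have h2 : ⟪f t, w t⟫ = 0 := hperp t ht (w t) hw'.2
    have hA₀ux : A₀ (u t + x t) = A₀ (u t) := by
      rw [map_add, hxzero t ht, add_zero]
    rw [hA₁] at key ⊢
    simp only [ContinuousLinearMap.zero_apply, zero_add] at key ⊢
    rw [hA₀ux]
    have h3 : ⟪A₀ (u t) - f t, w t⟫ = 0 := by
      rw [inner_sub_left, h1, h2, sub_zero]
    rw [show z - (vu t + w t) = (z - vu t) - w t from by abel, inner_sub_right, h3, sub_zero]
    exact key
end
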